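/- arXiv:2202.03827 — 10 statements merged into one kernel-verified Lean document; each statement's English description precedes it below -/
import Mathlib

section
/- Let x₀ ∈ ℝ, ε > 0, j ∈ ℕ, n > 0 a real number, and let V : ℝ → ℝ be continuous and nondecreasing on [x₀, ∞). Let x₁, …, x_j ∈ (x₀ − ε, x₀ + ε) and define f(x) = (∏_{i=1}^{j} (x − x_i)(e^x − e^{x_i})) · e^{−nV(x)}. Then f(x) ≥ 0 for every x ∈ ℝ, and the (well-defined, possibly infinite) Lebesgue integral of f over ℝ satisfies ∫_ℝ f(x) dx ≥ ε^{j+1} (e^{x₀+2ε} − e^{x₀+ε})^j e^{−nV(x₀+3ε)}. -/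
open MeasureTheory

theorem stmt_2 (x₀ ε : ℝ) (hε : 0 < ε) (j : ℕ) (n : ℝ) (hn : 0 < n)
    (V : ℝ → ℝ) (hVcont : ContinuousOn V (Set.Ici x₀))
    (hVmono : MonotoneOn V (Set.Ici x₀))
    (xs : Fin j → ℝ) (hxs : ∀ i, xs i ∈ Set.Ioo (x₀ - ε) (x₀ + ε))
    (f : ℝ → ℝ)
    (hf : ∀ x : ℝ, f x =
      (∏ i, ((x - xs i) * (Real.exp x - Real.exp (xs i)))) * Real.exp (-(n * V x))) :
    (∀ x : ℝ, 0 ≤ f x) ∧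
    ENNReal.ofReal
        (ε ^ (j + 1) * (Real.exp (x₀ + 2 * ε) - Real.exp (x₀ + ε)) ^ j *
          Real.exp (-(n * V (x₀ + 3 * ε)))) ≤
      ∫⁻ x : ℝ, ENNReal.ofReal (f x) := by
  have hnonneg : ∀ x : ℝ, 0 ≤ f x := by
    intro x
    rw [hf]
    apply mul_nonneg _ (Real.exp_pos _).le
    apply Finset.prod_nonneg
    intro i _
    rcases le_total x (xs i) with h | h
    · have h2 : Real.exp x ≤ Real.exp (xs i) := Real.exp_le_exp.2 h
      nlinarith
    · exact mul_nonneg (by linarith) (sub_nonneg.2 (Real.exp_le_exp.2 h))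
  refine ⟨hnonneg, ?_⟩
  set a := x₀ + 2 * ε with ha
  set b := x₀ + 3 * ε with hb
  set E := Real.exp (x₀ + 2 * ε) - Real.exp (x₀ + ε) with hE
  have hEpos : 0 < E := sub_pos.2 (Real.exp_lt_exp.2 (by linarith))
  set c := ε ^ j * E ^ j * Real.exp (-(n * V b)) with hc
  have hcpos : 0 < c := by positivity
  have hlow : ∀ x ∈ Set.Icc a b, c ≤ f x := by
    intro x hx
    obtain ⟨hx1, hx2⟩ := hx
    rw [hf]
    have hprod : ε ^ j * E ^ j ≤
        ∏ i, ((x - xs i) * (Real.exp x - Real.exp (xs i))) := by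
      have : ∏ _i : Fin j, (ε * E) = ε ^ j * E ^ j := by
        simp [Finset.prod_const, mul_pow]
      rw [← this]
      apply Finset.prod_le_prod
      · intro i _; positivity
      · intro i _
        obtain ⟨hi1, hi2⟩ := hxs i
        apply mul_le_mul (by simp [ha] at hx1; linarith)
        · have : Real.exp (xs i) ≤ Real.exp (x₀ + ε) := Real.exp_le_exp.2 hi2.le
          have h2 : Real.exp (x₀ + 2 * ε) ≤ Real.exp x := Real.exp_le_exp.2 hx1
          simp only [hE]; linarith
        · exact hEpos.le
        · linarith [hε, (hxs i).2, hx1]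
    have hexp : Real.exp (-(n * V b)) ≤ Real.exp (-(n * V x)) := by
      apply Real.exp_le_exp.2
      have hxIci : x ∈ Set.Ici x₀ := Set.mem_Ici.2 (by simp [ha] at hx1; linarith)
      have hbIci : b ∈ Set.Ici x₀ := by simp [hb]; linarith
      have : V x ≤ V b := hVmono hxIci hbIci (by simp [hb, ha] at hx2 ⊢; linarith)
      nlinarith
    calc c = ε ^ j * E ^ j * Real.exp (-(n * V b)) := rfl
      _ ≤ (∏ i, ((x - xs i) * (Real.exp x - Real.exp (xs i)))) *
          Real.exp (-(n * V x)) := by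
        apply mul_le_mul hprod hexp (Real.exp_pos _).le
        exact le_trans (by positivity) hprod
  have key : ∫⁻ x : ℝ, ENNReal.ofReal (f x) ≥
      ENNReal.ofReal c * volume (Set.Icc a b) := by
    rw [← lintegral_indicator_const measurableSet_Icc]
    apply lintegral_mono
    intro x
    by_cases hx : x ∈ Set.Icc a b
    · rw [Set.indicator_of_mem hx]
      exact ENNReal.ofReal_le_ofReal (hlow x hx)
    · rw [Set.indicator_of_notMem hx]; exact zero_le
  have hvol : volume (Set.Icc a b) = ENNReal.ofReal ε := by
    rw [Real.volume_Icc]; congr 1; simp [ha, hb]; ring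
  calc ENNReal.ofReal (ε ^ (j + 1) * E ^ j * Real.exp (-(n * V b)))
      = ENNReal.ofReal (c * ε) := by congr 1; simp [hc]; ring
    _ = ENNReal.ofReal c * ENNReal.ofReal ε := ENNReal.ofReal_mul hcpos.le
    _ = ENNReal.ofReal c * volume (Set.Icc a b) := by rw [hvol]
    _ ≤ ∫⁻ x : ℝ, ENNReal.ofReal (f x) := key
end

section
/- For every z ∈ ℂ with z ≠ 0, the doubly indexed family (z^{k+l}/(1+k+l)!) for k ≥ 0 and l ≥ 1 is absolutely summable, and ∑_{l=1}^{∞} ∑_{k=0}^{∞} z^{k+l}/(1+k+l)! = (1 − 1/z)·e^z + 1/z. -/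
set_option maxHeartbeats 1000000

open Finset

theorem stmt_6 (z : ℂ) (hz : z ≠ 0) :
    Summable (fun p : ℕ × ℕ =>
        z ^ (p.1 + (p.2 + 1)) / (Nat.factorial (1 + p.1 + (p.2 + 1)) : ℂ)) ∧
    ∑' l : ℕ, ∑' k : ℕ, z ^ (k + (l + 1)) / (Nat.factorial (1 + k + (l + 1)) : ℂ) =
      (1 - 1 / z) * Complex.exp z + 1 / z := by
  set g : ℕ × ℕ → ℂ := fun p => z ^ (p.1 + p.2 + 1) / (Nat.factorial (p.1 + p.2 + 2) : ℂ)
    with hgdef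
  have key : ∀ k l : ℕ, z ^ (k + (l + 1)) / (Nat.factorial (1 + k + (l + 1)) : ℂ) = g (k, l) := by
    intro k l
    have e1 : k + (l + 1) = k + l + 1 := by omega
    have e2 : 1 + k + (l + 1) = k + l + 2 := by omega
    simp only [hgdef, e1, e2]
  -- summability
  have ha : Summable (fun n : ℕ => ‖z‖ ^ n / n.factorial) := Real.summable_pow_div_factorial ‖z‖
  have hprod : Summable (fun p : ℕ × ℕ =>
      (‖z‖ ^ p.1 / p.1.factorial) * (‖z‖ ^ p.2 / p.2.factorial)) :=
    ha.mul_of_nonneg ha (fun n => by positivity) (fun n => by positivity)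
  have hsum : Summable g := by
    apply Summable.of_norm_bounded (hprod.mul_left ‖z‖)
    rintro ⟨k, l⟩
    have hfact : ((k.factorial : ℝ) * l.factorial) ≤ ((k + l + 2).factorial : ℝ) := by
      exact_mod_cast Nat.le_of_dvd (Nat.factorial_pos _)
        ((Nat.factorial_mul_factorial_dvd_factorial_add k l).trans
          (Nat.factorial_dvd_factorial (by omega)))
    have hb : (0:ℝ) < (k.factorial : ℝ) * l.factorial := by positivity
    simp only [hgdef, norm_div, norm_pow, Complex.norm_natCast]
    have hrhs : ‖z‖ * (‖z‖ ^ k / k.factorial * (‖z‖ ^ l / l.factorial))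
        = ‖z‖ ^ (k + l + 1) / ((k.factorial : ℝ) * l.factorial) := by
      rw [pow_succ, pow_add]; ring
    rw [hrhs]
    exact div_le_div_of_nonneg_left (by positivity) hb hfact
  constructor
  · have : (fun p : ℕ × ℕ =>
        z ^ (p.1 + (p.2 + 1)) / (Nat.factorial (1 + p.1 + (p.2 + 1)) : ℂ)) = g :=
      funext fun p => key p.1 p.2
    rw [this]; exact hsum
  · have h1 : ∑' l : ℕ, ∑' k : ℕ, z ^ (k + (l + 1)) / (Nat.factorial (1 + k + (l + 1)) : ℂ)
        = ∑' l : ℕ, ∑' k : ℕ, g (k, l) := by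
      simp only [key]
    rw [h1]
    have hswap : Summable (fun p : ℕ × ℕ => g (p.2, p.1)) := hsum.prod_symm
    have h2 : ∑' l : ℕ, ∑' k : ℕ, g (k, l) = ∑' p : ℕ × ℕ, g p := by
      rw [← Summable.tsum_prod' hswap (fun b => hswap.prod_factor b)]
      exact (Equiv.prodComm ℕ ℕ).tsum_eq g
    rw [h2]
    -- reindex along antidiagonals
    have h3 : ∑' p : ℕ × ℕ, g p
        = ∑' n : ℕ, ((n : ℂ) + 1) * (z ^ (n + 1) / (Nat.factorial (n + 2) : ℂ)) := by
      have hsig : Summable (fun x : Σ n : ℕ, {p // p ∈ antidiagonal n} => g (x.2 : ℕ × ℕ)) :=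
        (Equiv.summable_iff Finset.HasAntidiagonal.sigmaAntidiagonalEquivProd).mpr hsum
      calc ∑' p : ℕ × ℕ, g p
          = ∑' x : Σ n : ℕ, {p // p ∈ antidiagonal n}, g (x.2 : ℕ × ℕ) :=
            (Equiv.tsum_eq Finset.HasAntidiagonal.sigmaAntidiagonalEquivProd g).symm
        _ = ∑' n : ℕ, ∑' c : {p // p ∈ antidiagonal n}, g (c : ℕ × ℕ) := Summable.tsum_sigma hsig
        _ = ∑' n : ℕ, ((n : ℂ) + 1) * (z ^ (n + 1) / (Nat.factorial (n + 2) : ℂ)) := ?_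
      refine tsum_congr fun n => ?_
      have hsub : ∑' c : (antidiagonal n : Finset (ℕ × ℕ)),
          g (c : ℕ × ℕ)
          = ∑ p ∈ antidiagonal n, g p := Finset.tsum_subtype _ _
      have hconst : ∑ p ∈ antidiagonal n, g p
          = ∑ _p ∈ antidiagonal n, z ^ (n + 1) / (Nat.factorial (n + 2) : ℂ) := by
        refine Finset.sum_congr rfl fun p hp => ?_
        have hpn : p.1 + p.2 = n := Finset.HasAntidiagonal.mem_antidiagonal.mp hp
        simp only [hgdef]
        rw [hpn]
      rw [hsub, hconst, Finset.sum_const, Finset.Nat.card_antidiagonal, nsmul_eq_mul]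
      push_cast
      ring
    rw [h3]
    -- now the single series
    have hf : Summable (fun n : ℕ => z ^ n / (n.factorial : ℂ)) :=
      NormedSpace.expSeries_div_summable z
    have hE : ∑' n : ℕ, z ^ n / (n.factorial : ℂ) = Complex.exp z := by
      rw [Complex.exp_eq_exp_ℂ, NormedSpace.exp_eq_tsum_div]
    have hf1 : Summable (fun n : ℕ => z ^ (n + 1) / (Nat.factorial (n + 1) : ℂ)) :=
      hf.comp_injective (add_left_injective 1)
    have hf2' : Summable (fun n : ℕ => z ^ (n + 2) / (Nat.factorial (n + 2) : ℂ)) :=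
      hf.comp_injective (add_left_injective 2)
    have hdiv : ∀ n : ℕ, z ^ (n + 1) / (Nat.factorial (n + 2) : ℂ)
        = z⁻¹ * (z ^ (n + 2) / (Nat.factorial (n + 2) : ℂ)) := by
      intro n
      have hzz : z ^ (n + 2) = z * z ^ (n + 1) := by ring
      rw [hzz, mul_div_assoc, ← mul_assoc, inv_mul_cancel₀ hz, one_mul]
    have hf2 : Summable (fun n : ℕ => z ^ (n + 1) / (Nat.factorial (n + 2) : ℂ)) := by
      rw [show (fun n : ℕ => z ^ (n + 1) / (Nat.factorial (n + 2) : ℂ))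
          = fun n : ℕ => z⁻¹ * (z ^ (n + 2) / (Nat.factorial (n + 2) : ℂ)) from funext hdiv]
      exact hf2'.mul_left _
    have hA : ∑' n : ℕ, z ^ (n + 1) / (Nat.factorial (n + 1) : ℂ) = Complex.exp z - 1 := by
      have h0 := Summable.tsum_eq_zero_add hf
      simp only [pow_zero, Nat.factorial_zero, Nat.cast_one, div_one] at h0
      rw [hE] at h0
      linear_combination -h0
    have hT2 : ∑' n : ℕ, z ^ (n + 2) / (Nat.factorial (n + 2) : ℂ)
        = Complex.exp z - 1 - z := by
      have h0 := Summable.tsum_eq_zero_add hf1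
      simp only [pow_one, Nat.factorial_one, Nat.cast_one, div_one, zero_add] at h0
      rw [hA] at h0
      linear_combination -h0
    have hB : ∑' n : ℕ, z ^ (n + 1) / (Nat.factorial (n + 2) : ℂ)
        = z⁻¹ * (Complex.exp z - 1 - z) := by
      rw [tsum_congr hdiv, tsum_mul_left, hT2]
    have hterm : ∀ n : ℕ, ((n : ℂ) + 1) * (z ^ (n + 1) / (Nat.factorial (n + 2) : ℂ))
        = z ^ (n + 1) / (Nat.factorial (n + 1) : ℂ)
          - z ^ (n + 1) / (Nat.factorial (n + 2) : ℂ) := by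
      intro n
      have h2 : (Nat.factorial (n + 2) : ℂ) = ((n : ℂ) + 2) * (Nat.factorial (n + 1) : ℂ) := by
        rw [Nat.factorial_succ (n + 1)]
        push_cast
        ring
      have hne1 : (Nat.factorial (n + 1) : ℂ) ≠ 0 :=
        Nat.cast_ne_zero.mpr (Nat.factorial_ne_zero _)
      have hne2 : ((n : ℂ) + 2) ≠ 0 := by
        have : ((n + 2 : ℕ) : ℂ) ≠ 0 := Nat.cast_ne_zero.mpr (by omega)
        push_cast at this
        exact this
      rw [h2]
      field_simp
      ring
    rw [tsum_congr hterm, Summable.tsum_sub hf1 hf2, hA, hB]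
    field_simp
    ring
end

section
/- For all x, y ∈ ℂ with x ≠ y, the doubly indexed family (x^k y^l/(k+l)!) for k ≥ 0 and l ≥ 1 is absolutely summable, and ∑_{l=1}^{∞} ∑_{k=0}^{∞} x^k y^l/(k+l)! = (y/(y − x))·(e^y − e^x). -/
set_option maxHeartbeats 1000000

open Finset NormedSpace in
theorem stmt_7 (x y : ℂ) (hxy : x ≠ y) :
    Summable (fun p : ℕ × ℕ =>
        x ^ p.1 * y ^ (p.2 + 1) / (Nat.factorial (p.1 + (p.2 + 1)) : ℂ)) ∧
    ∑' l : ℕ, ∑' k : ℕ, x ^ k * y ^ (l + 1) / (Nat.factorial (k + (l + 1)) : ℂ) =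
      (y / (y - x)) * (Complex.exp y - Complex.exp x) := by
  have hyx : y - x ≠ 0 := sub_ne_zero.mpr (Ne.symm hxy)
  set f : ℕ × ℕ → ℂ := fun p => x ^ p.1 * y ^ (p.2 + 1) / (Nat.factorial (p.1 + (p.2 + 1)) : ℂ)
    with hfdef
  have hsum : Summable f := by
    apply Summable.of_norm_bounded
      (g := fun p : ℕ × ℕ => (‖x‖ ^ p.1 / (Nat.factorial p.1 : ℝ)) * (‖y‖ ^ (p.2 + 1) / (Nat.factorial (p.2 + 1) : ℝ)))
    · exact (Real.summable_pow_div_factorial ‖x‖).mul_of_nonneg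
        ((summable_nat_add_iff 1).2 (Real.summable_pow_div_factorial ‖y‖))
        (fun k => by positivity) (fun l => by positivity)
    · rintro ⟨k, l⟩
      have hle : ((Nat.factorial k * Nat.factorial (l + 1) : ℕ) : ℝ) ≤ ((Nat.factorial (k + (l + 1)) : ℕ) : ℝ) := by
        exact_mod_cast Nat.le_of_dvd (Nat.factorial_pos _)
          (Nat.factorial_mul_factorial_dvd_factorial_add k (l + 1))
      calc ‖f (k, l)‖
          = ‖x‖ ^ k * ‖y‖ ^ (l + 1) / (Nat.factorial (k + (l + 1)) : ℝ) := by
            simp [hfdef, norm_div, norm_mul, norm_pow]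
        _ ≤ ‖x‖ ^ k * ‖y‖ ^ (l + 1) / ((Nat.factorial k : ℝ) * (Nat.factorial (l + 1) : ℝ)) := by
            gcongr
            exact_mod_cast hle
        _ = (‖x‖ ^ k / (Nat.factorial k : ℝ)) * (‖y‖ ^ (l + 1) / (Nat.factorial (l + 1) : ℝ)) := by
            rw [mul_div_mul_comm]
  refine ⟨hsum, ?_⟩
  have se : ∀ z : ℂ, Summable fun n : ℕ => z ^ (n + 1) / (Nat.factorial (n + 1) : ℂ) := fun z =>
    (summable_nat_add_iff 1).2 (expSeries_div_summable z)
  have hexp : ∀ z : ℂ, ∑' n : ℕ, z ^ (n + 1) / (Nat.factorial (n + 1) : ℂ) = Complex.exp z - 1 := by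
    intro z
    have h := Summable.tsum_eq_zero_add (expSeries_div_summable z)
    simp only [Complex.exp_eq_exp_ℂ, exp_eq_tsum_div]
    simp only [pow_zero, Nat.factorial_zero, Nat.cast_one, div_one] at h
    rw [h]; ring
  have h1 : ∑' l : ℕ, ∑' k : ℕ, x ^ k * y ^ (l + 1) / (Nat.factorial (k + (l + 1)) : ℂ)
      = ∑' p : ℕ × ℕ, f p.swap :=
    (Summable.tsum_prod' hsum.prod_symm fun b => hsum.prod_symm.prod_factor b).symm
  have h2 : ∑' p : ℕ × ℕ, f p.swap = ∑' p : ℕ × ℕ, f p := (Equiv.prodComm ℕ ℕ).tsum_eq f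
  have hsig : Summable (fun s : Σ n : ℕ, antidiagonal n => f s.2) :=
    Finset.HasAntidiagonal.sigmaAntidiagonalEquivProd.summable_iff.mpr hsum
  have h3 : ∑' p : ℕ × ℕ, f p = ∑' n : ℕ, ∑' kl : antidiagonal n, f kl := by
    rw [← Finset.HasAntidiagonal.sigmaAntidiagonalEquivProd.tsum_eq f]
    exact Summable.tsum_sigma' (fun n => (hasSum_fintype _).summable) hsig
  have h4 : ∀ n : ℕ, ∑' kl : antidiagonal n, f (kl : ℕ × ℕ)
      = (y / (y - x)) * (y ^ (n + 1) / (Nat.factorial (n + 1) : ℂ) - x ^ (n + 1) / (Nat.factorial (n + 1) : ℂ)) := by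
    intro n
    rw [Finset.tsum_subtype, Finset.Nat.sum_antidiagonal_eq_sum_range_succ_mk]
    have hfac : ((Nat.factorial (n + 1)) : ℂ) ≠ 0 := Nat.cast_ne_zero.2 (Nat.factorial_ne_zero _)
    have hstep : ∀ i ∈ range (n + 1),
        f (i, n - i) = x ^ i * y ^ (n - i) * (y / (Nat.factorial (n + 1) : ℂ)) := by
      intro i hi
      have hin : i + (n - i + 1) = n + 1 := by
        have := Finset.mem_range.1 hi; omega
      simp only [hfdef, hin]
      rw [pow_succ]
      ring
    rw [Finset.sum_congr rfl hstep, ← Finset.sum_mul]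
    have hgeom : (∑ i ∈ range (n + 1), x ^ i * y ^ (n - i)) * (x - y)
        = x ^ (n + 1) - y ^ (n + 1) := by
      simpa using geom_sum₂_mul x y (n + 1)
    have hxy' : x - y ≠ 0 := sub_ne_zero.mpr hxy
    have hS : (∑ i ∈ range (n + 1), x ^ i * y ^ (n - i))
        = (x ^ (n + 1) - y ^ (n + 1)) / (x - y) := by
      field_simp
      linear_combination hgeom
    rw [hS]
    field_simp
    ring
  rw [h1, h2, h3, tsum_congr h4, tsum_mul_left, Summable.tsum_sub (se y) (se x), hexp y, hexp x]
  ring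
end

section
/- For all x, y ∈ ℂ with x ≠ y, x ≠ 0, y ≠ 0, the doubly indexed family (x^k y^l/(1+k+l)!) for k ≥ 0 and l ≥ 1 is absolutely summable, and ∑_{l=1}^{∞} ∑_{k=0}^{∞} x^k y^l/(1+k+l)! = (y/(y − x))·(e^y/y − e^x/x) + 1/x. -/
set_option maxHeartbeats 1000000
theorem stmt_8 (x y : ℂ) (hxy : x ≠ y) (hx : x ≠ 0) (hy : y ≠ 0) :
    Summable (fun p : ℕ × ℕ =>
        x ^ p.1 * y ^ (p.2 + 1) / (Nat.factorial (1 + p.1 + (p.2 + 1)) : ℂ)) ∧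
    ∑' l : ℕ, ∑' k : ℕ, x ^ k * y ^ (l + 1) / (Nat.factorial (1 + k + (l + 1)) : ℂ) =
      (y / (y - x)) * (Complex.exp y / y - Complex.exp x / x) + 1 / x := by
  have hidx : ∀ k l : ℕ, 1 + k + (l + 1) = k + l + 2 := fun _ _ => by omega
  simp only [hidx]
  set f : ℕ × ℕ → ℂ := fun p => x ^ p.1 * y ^ (p.2 + 1) / (Nat.factorial (p.1 + p.2 + 2) : ℂ)
    with hf
  have hexp : ∀ z : ℂ, ∑' n : ℕ, z ^ n / (Nat.factorial n : ℂ) = Complex.exp z := by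
    intro z
    rw [Complex.exp_eq_exp_ℂ, NormedSpace.exp_eq_tsum_div]
  have hsummexp : ∀ z : ℂ, Summable fun n : ℕ => z ^ n / (Nat.factorial n : ℂ) :=
    fun z => NormedSpace.expSeries_div_summable z
  have hsumshift : ∀ z : ℂ, Summable fun n : ℕ => z ^ (n + 2) / (Nat.factorial (n + 2) : ℂ) :=
    fun z => (summable_nat_add_iff 2).mpr (hsummexp z)
  have hshift : ∀ z : ℂ,
      ∑' n : ℕ, z ^ (n + 2) / (Nat.factorial (n + 2) : ℂ) = Complex.exp z - 1 - z := by
    intro z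
    have h := Summable.sum_add_tsum_nat_add (f := fun n : ℕ => z ^ n / (Nat.factorial n : ℂ)) 2
      (hsummexp z)
    rw [hexp z] at h
    have h2 : (∑ i ∈ Finset.range 2, z ^ i / (Nat.factorial i : ℂ)) = 1 + z := by
      simp [Finset.sum_range_succ, Nat.factorial]
    rw [h2] at h
    linear_combination h
  -- Summability
  have hsum : Summable f := by
    apply Summable.of_norm
    have hg : Summable fun k : ℕ => ‖x‖ ^ k / (Nat.factorial k : ℝ) :=
      Real.summable_pow_div_factorial ‖x‖
    have hh : Summable fun l : ℕ => ‖y‖ ^ (l + 1) / (Nat.factorial (l + 1) : ℝ) :=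
      (summable_nat_add_iff 1).mpr (Real.summable_pow_div_factorial ‖y‖)
    refine Summable.of_nonneg_of_le (fun p => norm_nonneg _) ?_
      (hg.mul_of_nonneg hh (fun k => by positivity) (fun l => by positivity))
    rintro ⟨k, l⟩
    have hfle : (Nat.factorial k * Nat.factorial (l + 1) : ℕ) ≤ Nat.factorial (k + l + 2) := by
      calc Nat.factorial k * Nat.factorial (l + 1) ≤ Nat.factorial (k + (l + 1)) :=
            Nat.le_of_dvd (Nat.factorial_pos _)
              (Nat.factorial_mul_factorial_dvd_factorial_add k (l + 1))
        _ ≤ Nat.factorial (k + l + 2) := Nat.factorial_le (by omega)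
    have hnorm : ‖f (k, l)‖ = ‖x‖ ^ k * ‖y‖ ^ (l + 1) / (Nat.factorial (k + l + 2) : ℝ) := by
      simp [hf, norm_div, norm_mul, norm_pow]
    rw [hnorm, div_mul_div_comm]
    apply div_le_div_of_nonneg_left (by positivity) (by positivity)
    calc ((Nat.factorial k : ℝ) * Nat.factorial (l + 1))
        = ((Nat.factorial k * Nat.factorial (l + 1) : ℕ) : ℝ) := by push_cast; ring
      _ ≤ (Nat.factorial (k + l + 2) : ℝ) := Nat.cast_le.mpr hfle
  refine ⟨hsum, ?_⟩
  -- swap order of summation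
  have hswap : (∑' l : ℕ, ∑' k : ℕ, f (k, l)) = ∑' p : ℕ × ℕ, f p := by
    rw [Summable.tsum_comm (f := fun k l => f (k, l)) hsum]
    exact (Summable.tsum_prod' hsum fun k => hsum.prod_factor k).symm
  have hdiag : (∑' p : ℕ × ℕ, f p) = ∑' n : ℕ, ∑ kl ∈ Finset.HasAntidiagonal.antidiagonal n, f kl := by
    refine ((Finset.HasAntidiagonal.sigmaAntidiagonalEquivProd.tsum_eq f).symm.trans ?_)
    refine (Summable.tsum_sigma' (f := fun c => f (Finset.HasAntidiagonal.sigmaAntidiagonalEquivProd c))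
      (fun n => (hasSum_fintype _).summable)
      (Finset.HasAntidiagonal.sigmaAntidiagonalEquivProd.summable_iff.mpr hsum)).trans ?_
    refine tsum_congr fun n => ?_
    rw [tsum_fintype]
    exact Finset.sum_finset_coe (fun kl => f kl) _
  have hterm : ∀ n : ℕ, (∑ kl ∈ Finset.HasAntidiagonal.antidiagonal n, f kl)
      = (y / (x - y)) *
        (x ^ (n + 1) / (Nat.factorial (n + 2) : ℂ) - y ^ (n + 1) / (Nat.factorial (n + 2) : ℂ)) := by
    intro n
    have hxy' : x - y ≠ 0 := sub_ne_zero.mpr hxy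
    have hfac : (Nat.factorial (n + 2) : ℂ) ≠ 0 := Nat.cast_ne_zero.mpr (Nat.factorial_pos _).ne'
    have h1 : (∑ kl ∈ Finset.HasAntidiagonal.antidiagonal n, f kl)
        = (∑ kl ∈ Finset.HasAntidiagonal.antidiagonal n, x ^ kl.1 * y ^ (kl.2 + 1)) /
            (Nat.factorial (n + 2) : ℂ) := by
      rw [Finset.sum_div]
      refine Finset.sum_congr rfl fun kl hkl => ?_
      rw [Finset.HasAntidiagonal.mem_antidiagonal] at hkl
      rw [hf]
      simp only
      rw [hkl]
    have hgeom := geom_sum₂_mul x y (n + 1)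
    simp only [Nat.add_sub_cancel] at hgeom
    have h2 : (∑ kl ∈ Finset.HasAntidiagonal.antidiagonal n, x ^ kl.1 * y ^ (kl.2 + 1))
        = y * ∑ i ∈ Finset.range (n + 1), x ^ i * y ^ (n - i) := by
      rw [Finset.Nat.sum_antidiagonal_eq_sum_range_succ_mk
        (fun kl => x ^ kl.1 * y ^ (kl.2 + 1)) n, Finset.mul_sum]
      exact Finset.sum_congr rfl fun i _ => by ring
    have h3 : (∑ i ∈ Finset.range (n + 1), x ^ i * y ^ (n - i))
        = (x ^ (n + 1) - y ^ (n + 1)) / (x - y) :=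
      eq_div_of_mul_eq hxy' hgeom
    rw [h1, h2, h3]
    field_simp <;> ring
  rw [hswap, hdiag, tsum_congr hterm]
  have hstep : (∑' n : ℕ, (y / (x - y)) *
      (x ^ (n + 1) / (Nat.factorial (n + 2) : ℂ) - y ^ (n + 1) / (Nat.factorial (n + 2) : ℂ)))
      = (y / (x - y)) * ∑' n : ℕ,
        (x⁻¹ * (x ^ (n + 2) / (Nat.factorial (n + 2) : ℂ))
          - y⁻¹ * (y ^ (n + 2) / (Nat.factorial (n + 2) : ℂ))) := by
    rw [tsum_mul_left]
    congr 1
    refine tsum_congr fun n => ?_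
    have hfac : (Nat.factorial (n + 2) : ℂ) ≠ 0 := Nat.cast_ne_zero.mpr (Nat.factorial_pos _).ne'
    field_simp <;> ring
  rw [hstep, Summable.tsum_sub ((hsumshift x).mul_left x⁻¹) ((hsumshift y).mul_left y⁻¹),
    tsum_mul_left, tsum_mul_left, hshift x, hshift y]
  have hxy' : x - y ≠ 0 := sub_ne_zero.mpr hxy
  have hyx' : y - x ≠ 0 := sub_ne_zero.mpr (Ne.symm hxy)
  field_simp <;> ring
end

section
/- For every c ∈ ℂ and every s ∈ ℂ with s ≠ 1/2, the doubly indexed family ((c/(1+k+l)! + 1/(k+l)!)·c^{k+l}·(s − 1/2)^{k+l}) for k ≥ 0 and l ≥ 1 is absolutely summable, and ∑_{l=1}^{∞} ∑_{k=0}^{∞} (c/(1+k+l)! + 1/(k+l)!)·c^{k+l}·(s − 1/2)^{k+l} = (c·(s + 1/2) − 1/(s − 1/2))·e^{c(s − 1/2)} + 1/(s − 1/2). -/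
open Finset

lemma key_aux (h : ℕ → ℂ) (hsum : Summable fun n : ℕ => ((n : ℝ) + 1) * ‖h (n + 1)‖) :
    Summable (fun p : ℕ × ℕ => h (p.1 + p.2 + 1)) ∧
      ∑' p : ℕ × ℕ, h (p.1 + p.2 + 1) = ∑' n : ℕ, ((n : ℂ) + 1) * h (n + 1) := by
  classical
  set e := (Finset.HasAntidiagonal.sigmaAntidiagonalEquivProd : (Σ n : ℕ, Finset.HasAntidiagonal.antidiagonal n) ≃ ℕ × ℕ)
  have hcomp : (fun p : ℕ × ℕ => h (p.1 + p.2 + 1)) ∘ e = fun x : Σ n : ℕ,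
      Finset.HasAntidiagonal.antidiagonal n => h (x.1 + 1) := by
    funext x
    obtain ⟨n, ⟨⟨k, l⟩, hm⟩⟩ := x
    rw [Finset.HasAntidiagonal.mem_antidiagonal] at hm
    simp [e, Finset.HasAntidiagonal.sigmaAntidiagonalEquivProd, hm]
  have hnorm : Summable (fun x : Σ n : ℕ, Finset.HasAntidiagonal.antidiagonal n => ‖h (x.1 + 1)‖) := by
    rw [summable_sigma_of_nonneg (fun _ => norm_nonneg _)]
    refine ⟨fun n => (hasSum_fintype _).summable, ?_⟩
    have : (fun n : ℕ => ∑' c : (Finset.HasAntidiagonal.antidiagonal n : Finset (ℕ × ℕ)), ‖h (n + 1)‖) =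
        fun n : ℕ => ((n : ℝ) + 1) * ‖h (n + 1)‖ := by
      funext n
      rw [tsum_fintype]
      simp [Finset.sum_const, Finset.card_univ, Nat.card_antidiagonal, nsmul_eq_mul]
    rw [this]
    exact hsum
  have hsig : Summable (fun x : Σ n : ℕ, Finset.HasAntidiagonal.antidiagonal n => h (x.1 + 1)) :=
    hnorm.of_norm
  have hprod : Summable (fun p : ℕ × ℕ => h (p.1 + p.2 + 1)) := by
    rw [← e.summable_iff, hcomp]
    exact hsig
  refine ⟨hprod, ?_⟩
  rw [← e.tsum_eq]
  have h2 : ∑' c : Σ n : ℕ, Finset.HasAntidiagonal.antidiagonal n, h ((e c).1 + (e c).2 + 1)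
      = ∑' x : Σ n : ℕ, Finset.HasAntidiagonal.antidiagonal n, h (x.1 + 1) :=
    tsum_congr fun x => congrFun hcomp x
  rw [h2, Summable.tsum_sigma hsig]
  congr 1
  funext n
  rw [tsum_fintype]
  simp [Finset.sum_const, Finset.card_univ, Nat.card_antidiagonal, nsmul_eq_mul]

theorem stmt_9 (c s : ℂ) (hs : s ≠ 1 / 2) :
    Summable (fun p : ℕ × ℕ =>
        (c / (Nat.factorial (1 + p.1 + (p.2 + 1)) : ℂ) +
            1 / (Nat.factorial (p.1 + (p.2 + 1)) : ℂ)) *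
          c ^ (p.1 + (p.2 + 1)) * (s - 1 / 2) ^ (p.1 + (p.2 + 1))) ∧
    ∑' l : ℕ, ∑' k : ℕ,
        (c / (Nat.factorial (1 + k + (l + 1)) : ℂ) +
            1 / (Nat.factorial (k + (l + 1)) : ℂ)) *
          c ^ (k + (l + 1)) * (s - 1 / 2) ^ (k + (l + 1)) =
      (c * (s + 1 / 2) - 1 / (s - 1 / 2)) * Complex.exp (c * (s - 1 / 2)) +
        1 / (s - 1 / 2) := by
  have hw : s - 1 / 2 ≠ 0 := sub_ne_zero.mpr hs
  set z : ℂ := c * (s - 1 / 2) with hz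
  set h : ℕ → ℂ := fun n => (c / ((n + 1).factorial : ℂ) + 1 / (n.factorial : ℂ)) * z ^ n
    with hh
  clear_value z h
  -- summability hypothesis for `key_aux`
  have hsum : Summable fun n : ℕ => ((n : ℝ) + 1) * ‖h (n + 1)‖ := by
    have hbig : Summable fun n : ℕ => (‖c‖ + 1) * ‖z‖ * (‖z‖ ^ n / n.factorial) :=
      (Real.summable_pow_div_factorial ‖z‖).mul_left _
    refine Summable.of_nonneg_of_le (fun n => ?_) (fun n => ?_) hbig
    · positivity
    · have h1 : ‖h (n + 1)‖ ≤ (‖c‖ + 1) / ((n + 1).factorial : ℝ) * ‖z‖ ^ (n + 1) := by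
        rw [hh]
        simp only
        rw [norm_mul, norm_pow]
        gcongr
        have e1 : ‖c / (((n + 1 + 1).factorial : ℕ) : ℂ)‖ = ‖c‖ / ((n + 1 + 1).factorial : ℝ) := by
          rw [norm_div]
          norm_cast
        have e2 : ‖(1 : ℂ) / (((n + 1).factorial : ℕ) : ℂ)‖ = 1 / ((n + 1).factorial : ℝ) := by
          rw [norm_div, norm_one]
          norm_cast
        calc ‖c / (((n + 1 + 1).factorial : ℕ) : ℂ) + 1 / (((n + 1).factorial : ℕ) : ℂ)‖
            ≤ ‖c / (((n + 1 + 1).factorial : ℕ) : ℂ)‖ + ‖(1:ℂ) / (((n + 1).factorial : ℕ) : ℂ)‖ :=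
              norm_add_le _ _
          _ = ‖c‖ / ((n + 1 + 1).factorial : ℝ) + 1 / ((n + 1).factorial : ℝ) := by rw [e1, e2]
          _ ≤ ‖c‖ / ((n + 1).factorial : ℝ) + 1 / ((n + 1).factorial : ℝ) := by
              have : ((n + 1).factorial : ℝ) ≤ ((n + 1 + 1).factorial : ℝ) := by
                exact_mod_cast Nat.factorial_le (Nat.le_succ _)
              gcongr
          _ = (‖c‖ + 1) / ((n + 1).factorial : ℝ) := by ring
      calc ((n : ℝ) + 1) * ‖h (n + 1)‖
          ≤ ((n : ℝ) + 1) * ((‖c‖ + 1) / ((n + 1).factorial : ℝ) * ‖z‖ ^ (n + 1)) := by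
            gcongr
        _ = (‖c‖ + 1) * ‖z‖ * (‖z‖ ^ n / n.factorial) := by
            rw [Nat.factorial_succ]
            push_cast
            have hnf : (n.factorial : ℝ) ≠ 0 := Nat.cast_ne_zero.mpr n.factorial_ne_zero
            have hn1 : ((n : ℝ) + 1) ≠ 0 := by positivity
            field_simp
            ring
  obtain ⟨hS, hT⟩ := key_aux h hsum
  have hfun : (fun p : ℕ × ℕ =>
      (c / (Nat.factorial (1 + p.1 + (p.2 + 1)) : ℂ) +
          1 / (Nat.factorial (p.1 + (p.2 + 1)) : ℂ)) *
        c ^ (p.1 + (p.2 + 1)) * (s - 1 / 2) ^ (p.1 + (p.2 + 1)))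
      = fun p : ℕ × ℕ => h (p.1 + p.2 + 1) := by
    funext p
    have e1 : 1 + p.1 + (p.2 + 1) = p.1 + p.2 + 1 + 1 := by ring
    have e2 : p.1 + (p.2 + 1) = p.1 + p.2 + 1 := by ring
    rw [e1, e2, hh]
    simp only [hz]
    rw [mul_pow]
    ring
  constructor
  · rw [hfun]; exact hS
  · -- rewrite the iterated sum as the product sum
    have hiter : (∑' l : ℕ, ∑' k : ℕ,
        (c / (Nat.factorial (1 + k + (l + 1)) : ℂ) +
            1 / (Nat.factorial (k + (l + 1)) : ℂ)) *
          c ^ (k + (l + 1)) * (s - 1 / 2) ^ (k + (l + 1)))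
        = ∑' p : ℕ × ℕ, h (p.1 + p.2 + 1) := by
      have hcongr : ∀ l k : ℕ,
          (c / (Nat.factorial (1 + k + (l + 1)) : ℂ) +
              1 / (Nat.factorial (k + (l + 1)) : ℂ)) *
            c ^ (k + (l + 1)) * (s - 1 / 2) ^ (k + (l + 1)) = h (k + l + 1) :=
        fun l k => congrFun hfun (k, l)
      calc (∑' l : ℕ, ∑' k : ℕ,
          (c / (Nat.factorial (1 + k + (l + 1)) : ℂ) +
              1 / (Nat.factorial (k + (l + 1)) : ℂ)) *
            c ^ (k + (l + 1)) * (s - 1 / 2) ^ (k + (l + 1)))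
          = ∑' l : ℕ, ∑' k : ℕ, h (k + l + 1) :=
            tsum_congr fun l => tsum_congr fun k => hcongr l k
        _ = ∑' k : ℕ, ∑' l : ℕ, h (k + l + 1) := by
            refine Summable.tsum_comm' hS ?_ ?_
            · exact fun k => hS.prod_factor k
            · exact fun l => hS.prod_symm.prod_factor l
        _ = ∑' p : ℕ × ℕ, h (p.1 + p.2 + 1) := (Summable.tsum_prod' hS fun k => hS.prod_factor k).symm
    rw [hiter, hT]
    -- now evaluate the single sum
    by_cases hc : c = 0
    · have hz0 : z = 0 := by rw [hz, hc, zero_mul]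
      have hzero : ∀ n : ℕ, ((n : ℂ) + 1) * h (n + 1) = 0 := by
        intro n
        rw [hh]
        simp [hz0]
      rw [tsum_congr hzero, tsum_zero, hz0, hc, Complex.exp_zero]
      ring
    · have hz0 : z ≠ 0 := by rw [hz]; exact mul_ne_zero hc hw
      have S0 : Summable fun n : ℕ => z ^ n / (n.factorial : ℂ) :=
        NormedSpace.expSeries_div_summable z
      have S1 : Summable fun n : ℕ => z ^ (n + 1) / ((n + 1).factorial : ℂ) :=
        (summable_nat_add_iff (f := fun m : ℕ => z ^ m / (m.factorial : ℂ)) 1).2 S0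
      have S2 : Summable fun n : ℕ => z ^ (n + 2) / ((n + 2).factorial : ℂ) :=
        (summable_nat_add_iff (f := fun m : ℕ => z ^ m / (m.factorial : ℂ)) 2).2 S0
      have hterm : ∀ n : ℕ, ((n : ℂ) + 1) * h (n + 1) =
          (c * (z ^ (n + 1) / ((n + 1).factorial : ℂ)) -
            (c / z) * (z ^ (n + 2) / ((n + 2).factorial : ℂ))) +
          z * (z ^ n / (n.factorial : ℂ)) := by
        intro n
        rw [hh]
        simp only
        rw [show n + 1 + 1 = n + 2 from rfl]
        have hn1 : ((n : ℂ) + 1) ≠ 0 := by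
          have : (((n + 1 : ℕ)) : ℂ) ≠ 0 := Nat.cast_ne_zero.mpr (by omega)
          push_cast at this; exact this
        have hn2 : ((n : ℂ) + 2) ≠ 0 := by
          have : (((n + 2 : ℕ)) : ℂ) ≠ 0 := Nat.cast_ne_zero.mpr (by omega)
          push_cast at this; exact this
        have e1 : (((n + 1).factorial : ℕ) : ℂ) = ((n : ℂ) + 1) * (n.factorial : ℂ) := by
          rw [Nat.factorial_succ]; push_cast; ring
        have e2 : (((n + 2).factorial : ℕ) : ℂ)
            = ((n : ℂ) + 2) * (((n + 1).factorial : ℕ) : ℂ) := by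
          rw [Nat.factorial_succ (n + 1)]; push_cast; ring
        have A : ((n : ℂ) + 1) * ((((n + 1).factorial : ℕ) : ℂ))⁻¹
            = (((n.factorial : ℕ)) : ℂ)⁻¹ := by
          rw [e1, mul_inv, ← mul_assoc, mul_inv_cancel₀ hn1, one_mul]
        have B : ((((n + 1).factorial : ℕ) : ℂ))⁻¹
            = ((n : ℂ) + 2) * ((((n + 2).factorial : ℕ) : ℂ))⁻¹ := by
          rw [e2, mul_inv, ← mul_assoc, mul_inv_cancel₀ hn2, one_mul]
        have hcoef : ((n : ℂ) + 1) * (c / ((n + 2).factorial : ℂ) + 1 / ((n + 1).factorial : ℂ))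
            = c / ((n + 1).factorial : ℂ) - c / ((n + 2).factorial : ℂ)
              + 1 / ((n : ℕ).factorial : ℂ) := by
          linear_combination A - c * B
        have hdiv : c / z * (z ^ (n + 2) / (((n + 2).factorial : ℕ) : ℂ))
            = c * z ^ (n + 1) / (((n + 2).factorial : ℕ) : ℂ) := by
          rw [div_mul_div_comm]
          have hnum : c * z ^ (n + 2) = z * (c * z ^ (n + 1)) := by ring
          rw [hnum, mul_div_mul_left _ _ hz0]
        rw [hdiv]
        linear_combination z ^ (n + 1) * hcoef
      rw [tsum_congr hterm]
      rw [Summable.tsum_add (((S1.mul_left c)).sub (S2.mul_left (c / z))) (S0.mul_left z),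
        Summable.tsum_sub (S1.mul_left c) (S2.mul_left (c / z)),
        tsum_mul_left, tsum_mul_left, tsum_mul_left]
      have hE : ∑' n : ℕ, z ^ n / (n.factorial : ℂ) = Complex.exp z := by
        rw [Complex.exp_eq_exp_ℂ, NormedSpace.exp_eq_tsum_div]
      have hE1 : ∑' n : ℕ, z ^ (n + 1) / ((n + 1).factorial : ℂ) = Complex.exp z - 1 := by
        have h0 := Summable.tsum_eq_zero_add S0
        rw [hE] at h0
        simp only [pow_zero, Nat.factorial_zero, Nat.cast_one, div_one] at h0
        rw [h0]; ring
      have hE2 : ∑' n : ℕ, z ^ (n + 2) / ((n + 2).factorial : ℂ) = Complex.exp z - 1 - z := by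
        have h0 := Summable.tsum_eq_zero_add S1
        rw [hE1] at h0
        simp only [zero_add, pow_one, Nat.factorial_one, Nat.cast_one, div_one] at h0
        have hfe : (fun n : ℕ => z ^ (n + 1 + 1) / ((n + 1 + 1).factorial : ℂ))
            = fun n : ℕ => z ^ (n + 2) / ((n + 2).factorial : ℂ) := rfl
        rw [hfe] at h0
        rw [h0]; ring
      rw [hE, hE1, hE2, hz]
      have hcw : c * (s - 1 / 2) ≠ 0 := mul_ne_zero hc hw
      have hq : c / (c * (s - 1 / 2)) = 1 / (s - 1 / 2) := by
        rw [div_eq_div_iff hcw hw]; ring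
      rw [hq]
      linear_combination c * mul_inv_cancel₀ hw
end

section
/- Let c ∈ ℂ and let u, v ∈ ℂ satisfy u ≠ v, u ≠ 1/2, v ≠ 1/2. Then the doubly indexed family ((c/(1+k+l)! + 1/(k+l)!)·c^{k+l}·(u − 1/2)^k·(v − 1/2)^l) for k ≥ 0 and l ≥ 1 is absolutely summable, and ∑_{l=1}^{∞} ∑_{k=0}^{∞} (c/(1+k+l)! + 1/(k+l)!)·c^{k+l}·(u − 1/2)^k·(v − 1/2)^l = ((v − 1/2)/(v − u))·[ ((v + 1/2)/(v − 1/2))·e^{c(v − 1/2)} − ((u + 1/2)/(u − 1/2))·e^{c(u − 1/2)} ] + 1/(u − 1/2). -/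
open Finset Complex

noncomputable def alp (c : ℂ) (n : ℕ) : ℂ :=
  (c / (Nat.factorial (n + 1) : ℂ) + 1 / (Nat.factorial n : ℂ)) * c ^ n

lemma hasSum_exp' (z : ℂ) : HasSum (fun n : ℕ => z ^ n / n.factorial) (Complex.exp z) := by
  rw [Complex.exp_eq_exp_ℂ]
  exact NormedSpace.expSeries_div_hasSum_exp z

lemma hasSum_alp (c x : ℂ) (hx : x ≠ 0) :
    HasSum (fun n => alp c n * x ^ n)
      ((Complex.exp (c * x) - 1) / x + Complex.exp (c * x)) := by
  have h := hasSum_exp' (c * x)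
  have h1 : HasSum (fun n : ℕ => (c * x) ^ (n + 1) / (n + 1).factorial)
      (Complex.exp (c * x) - 1) := by
    have := (hasSum_nat_add_iff' (f := fun n : ℕ => (c * x) ^ n / n.factorial) 1
      (g := Complex.exp (c * x))).2 h
    simpa using this
  have h2 := (h1.div_const x).add h
  have heq : ∀ n : ℕ, (c * x) ^ (n + 1) / ((n + 1).factorial : ℂ) / x
      + (c * x) ^ n / (n.factorial : ℂ) = alp c n * x ^ n := by
    intro n
    have hf1 : (((n + 1).factorial : ℕ) : ℂ) ≠ 0 := Nat.cast_ne_zero.mpr (Nat.factorial_ne_zero _)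
    have hf2 : ((n.factorial : ℕ) : ℂ) ≠ 0 := Nat.cast_ne_zero.mpr (Nat.factorial_ne_zero _)
    rw [alp]
    field_simp
    ring
  simpa only [heq] using h2

lemma hasSum_alp_succ (c x : ℂ) (hx : x ≠ 0) :
    HasSum (fun n => alp c (n + 1) * x ^ (n + 1))
      ((Complex.exp (c * x) - 1) / x + Complex.exp (c * x) - (c + 1)) := by
  have h := hasSum_alp c x hx
  have := (hasSum_nat_add_iff' (f := fun n : ℕ => alp c n * x ^ n) 1
    (g := (Complex.exp (c * x) - 1) / x + Complex.exp (c * x))).2 h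
  simpa [alp] using this

theorem stmt_10 (c u v : ℂ) (huv : u ≠ v) (hu : u ≠ 1 / 2) (hv : v ≠ 1 / 2) :
    Summable (fun p : ℕ × ℕ =>
        (c / (Nat.factorial (1 + p.1 + (p.2 + 1)) : ℂ) +
            1 / (Nat.factorial (p.1 + (p.2 + 1)) : ℂ)) *
          c ^ (p.1 + (p.2 + 1)) * (u - 1 / 2) ^ p.1 * (v - 1 / 2) ^ (p.2 + 1)) ∧
    ∑' l : ℕ, ∑' k : ℕ,
        (c / (Nat.factorial (1 + k + (l + 1)) : ℂ) +
            1 / (Nat.factorial (k + (l + 1)) : ℂ)) *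
          c ^ (k + (l + 1)) * (u - 1 / 2) ^ k * (v - 1 / 2) ^ (l + 1) =
      ((v - 1 / 2) / (v - u)) *
          (((v + 1 / 2) / (v - 1 / 2)) * Complex.exp (c * (v - 1 / 2)) -
            ((u + 1 / 2) / (u - 1 / 2)) * Complex.exp (c * (u - 1 / 2))) +
        1 / (u - 1 / 2) := by
  set a : ℂ := u - 1 / 2 with ha_def
  set b : ℂ := v - 1 / 2 with hb_def
  have ha : a ≠ 0 := sub_ne_zero.mpr hu
  have hb : b ≠ 0 := sub_ne_zero.mpr hv
  have hba : b - a ≠ 0 := by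
    rw [hb_def, ha_def]
    intro h
    exact huv (by linear_combination -h)
  have hab : a - b ≠ 0 := fun h => hba (by linear_combination -h)
  have key : ∀ k l : ℕ,
      (c / (Nat.factorial (1 + k + (l + 1)) : ℂ) +
          1 / (Nat.factorial (k + (l + 1)) : ℂ)) *
        c ^ (k + (l + 1)) * a ^ k * b ^ (l + 1)
      = alp c (k + l + 1) * a ^ k * b ^ (l + 1) := by
    intro k l
    have e1 : 1 + k + (l + 1) = (k + l + 1) + 1 := by omega
    have e2 : k + (l + 1) = k + l + 1 := by omega
    rw [e1, e2, alp]
  -- norm summability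
  set M : ℝ := max ‖a‖ ‖b‖ with hM_def
  have hM0 : (0 : ℝ) ≤ M := le_trans (norm_nonneg a) (le_max_left _ _)
  set K : ℝ := ‖c‖ + 1 with hK_def
  have hK0 : (0 : ℝ) ≤ K := by positivity
  set r : ℝ := ‖c‖ * M with hr_def
  have hr0 : (0 : ℝ) ≤ r := by positivity
  have halp_norm : ∀ m : ℕ, ‖alp c m‖ ≤ K * ‖c‖ ^ m / m.factorial := by
    intro m
    rw [alp]
    rw [norm_mul, norm_pow]
    have hfle : (m.factorial : ℝ) ≤ ((m + 1).factorial : ℝ) := by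
      exact_mod_cast Nat.factorial_le (Nat.le_succ m)
    have hfpos : (0 : ℝ) < m.factorial := by exact_mod_cast m.factorial_pos
    have h1 : ‖c / ((m + 1).factorial : ℂ) + 1 / (m.factorial : ℂ)‖
        ≤ K / m.factorial := by
      refine (norm_add_le _ _).trans ?_
      rw [norm_div, norm_div, norm_one, Complex.norm_natCast, Complex.norm_natCast]
      have h2 : ‖c‖ / ((m + 1).factorial : ℝ) ≤ ‖c‖ / (m.factorial : ℝ) := by gcongr
      calc ‖c‖ / ((m + 1).factorial : ℝ) + 1 / (m.factorial : ℝ)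
          ≤ ‖c‖ / (m.factorial : ℝ) + 1 / (m.factorial : ℝ) := by
            exact add_le_add h2 le_rfl
        _ = K / m.factorial := by rw [hK_def]; ring
    calc ‖c / ((m + 1).factorial : ℂ) + 1 / (m.factorial : ℂ)‖ * ‖c‖ ^ m
        ≤ (K / m.factorial) * ‖c‖ ^ m :=
          mul_le_mul_of_nonneg_right h1 (by positivity)
      _ = K * ‖c‖ ^ m / m.factorial := by ring
  have hbound : ∀ n : ℕ, ∀ p ∈ Finset.HasAntidiagonal.antidiagonal n,
      ‖alp c (p.1 + p.2 + 1) * a ^ p.1 * b ^ (p.2 + 1)‖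
        ≤ K * r ^ (n + 1) / (n + 1).factorial := by
    intro n p hp
    rw [Finset.HasAntidiagonal.mem_antidiagonal] at hp
    rw [norm_mul, norm_mul, norm_pow, norm_pow, hp]
    have haM : ‖a‖ ≤ M := le_max_left _ _
    have hbM : ‖b‖ ≤ M := le_max_right _ _
    have h1 : ‖a‖ ^ p.1 * ‖b‖ ^ (p.2 + 1) ≤ M ^ (n + 1) := by
      calc ‖a‖ ^ p.1 * ‖b‖ ^ (p.2 + 1)
          ≤ M ^ p.1 * M ^ (p.2 + 1) :=
            mul_le_mul (pow_le_pow_left₀ (norm_nonneg a) haM _)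
              (pow_le_pow_left₀ (norm_nonneg b) hbM _) (by positivity) (by positivity)
        _ = M ^ (n + 1) := by rw [← pow_add]; congr 1; omega
    have h0 : (0:ℝ) ≤ ‖a‖ ^ p.1 * ‖b‖ ^ (p.2 + 1) := by positivity
    calc ‖alp c (n + 1)‖ * ‖a‖ ^ p.1 * ‖b‖ ^ (p.2 + 1)
        = ‖alp c (n + 1)‖ * (‖a‖ ^ p.1 * ‖b‖ ^ (p.2 + 1)) := by ring
      _ ≤ (K * ‖c‖ ^ (n + 1) / (n + 1).factorial) * M ^ (n + 1) :=
          mul_le_mul (halp_norm (n + 1)) h1 h0 (by positivity)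
      _ = K * r ^ (n + 1) / (n + 1).factorial := by
          rw [hr_def, mul_pow]; ring
  have hs : Summable (fun n : ℕ => K * ((2 * r) ^ (n + 1) / (n + 1).factorial)) :=
    ((summable_nat_add_iff 1).2 (Real.summable_pow_div_factorial (2 * r))).mul_left K
  have hfin : ∀ n : ℕ,
      ∑ p ∈ Finset.HasAntidiagonal.antidiagonal n, ‖alp c (p.1 + p.2 + 1) * a ^ p.1 * b ^ (p.2 + 1)‖
        ≤ K * ((2 * r) ^ (n + 1) / (n + 1).factorial) := by
    intro n
    calc ∑ p ∈ Finset.HasAntidiagonal.antidiagonal n, ‖alp c (p.1 + p.2 + 1) * a ^ p.1 * b ^ (p.2 + 1)‖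
        ≤ ∑ _p ∈ Finset.HasAntidiagonal.antidiagonal n, K * r ^ (n + 1) / (n + 1).factorial :=
          Finset.sum_le_sum (hbound n)
      _ = (n + 1) * (K * r ^ (n + 1) / (n + 1).factorial) := by
          rw [Finset.sum_const, Finset.Nat.card_antidiagonal, nsmul_eq_mul]
          push_cast; ring
      _ ≤ 2 ^ (n + 1) * (K * r ^ (n + 1) / (n + 1).factorial) := by
          apply mul_le_mul_of_nonneg_right _ (by positivity)
          exact_mod_cast (Nat.lt_two_pow_self (n := n + 1)).le
      _ = K * ((2 * r) ^ (n + 1) / (n + 1).factorial) := by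
          rw [mul_pow]; ring
  have hsigma_norm : Summable (fun x : Σ n : ℕ, Finset.HasAntidiagonal.antidiagonal n =>
      ‖alp c ((x.2 : ℕ × ℕ).1 + (x.2 : ℕ × ℕ).2 + 1) * a ^ (x.2 : ℕ × ℕ).1
        * b ^ ((x.2 : ℕ × ℕ).2 + 1)‖) := by
    apply (summable_sigma_of_nonneg (fun _ => norm_nonneg _)).2
    refine ⟨fun n => Summable.of_finite, ?_⟩
    refine Summable.of_nonneg_of_le (fun n => tsum_nonneg fun _ => norm_nonneg _) ?_ hs
    intro n
    show (∑' p : { x : ℕ × ℕ // x ∈ Finset.HasAntidiagonal.antidiagonal n },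
        ‖alp c ((p : ℕ × ℕ).1 + (p : ℕ × ℕ).2 + 1) * a ^ (p : ℕ × ℕ).1
          * b ^ ((p : ℕ × ℕ).2 + 1)‖) ≤ _
    rw [tsum_fintype]
    rw [Finset.sum_coe_sort (Finset.HasAntidiagonal.antidiagonal n)
      (fun p : ℕ × ℕ => ‖alp c (p.1 + p.2 + 1) * a ^ p.1 * b ^ (p.2 + 1)‖)]
    exact hfin n
  have hnormsum : Summable
      (fun p : ℕ × ℕ => ‖alp c (p.1 + p.2 + 1) * a ^ p.1 * b ^ (p.2 + 1)‖) :=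
    Finset.HasAntidiagonal.sigmaAntidiagonalEquivProd.summable_iff.mp hsigma_norm
  have hFsum : Summable (fun p : ℕ × ℕ => alp c (p.1 + p.2 + 1) * a ^ p.1 * b ^ (p.2 + 1)) :=
    hnormsum.of_norm
  have hstmt : Summable (fun p : ℕ × ℕ =>
      (c / (Nat.factorial (1 + p.1 + (p.2 + 1)) : ℂ) +
          1 / (Nat.factorial (p.1 + (p.2 + 1)) : ℂ)) *
        c ^ (p.1 + (p.2 + 1)) * a ^ p.1 * b ^ (p.2 + 1)) := by
    exact hFsum.congr fun p => (key p.1 p.2).symm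
  refine ⟨hstmt, ?_⟩
  -- value computation
  have hG : Summable (fun q : ℕ × ℕ =>
      (c / (Nat.factorial (1 + q.2 + (q.1 + 1)) : ℂ) +
          1 / (Nat.factorial (q.2 + (q.1 + 1)) : ℂ)) *
        c ^ (q.2 + (q.1 + 1)) * a ^ q.2 * b ^ (q.1 + 1)) := by
    have := ((Equiv.prodComm ℕ ℕ).summable_iff
      (f := fun p : ℕ × ℕ =>
        (c / (Nat.factorial (1 + p.1 + (p.2 + 1)) : ℂ) +
            1 / (Nat.factorial (p.1 + (p.2 + 1)) : ℂ)) *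
          c ^ (p.1 + (p.2 + 1)) * a ^ p.1 * b ^ (p.2 + 1))).2 hstmt
    exact this
  have hiter : (∑' l : ℕ, ∑' k : ℕ,
      (c / (Nat.factorial (1 + k + (l + 1)) : ℂ) +
          1 / (Nat.factorial (k + (l + 1)) : ℂ)) *
        c ^ (k + (l + 1)) * a ^ k * b ^ (l + 1))
      = ∑' p : ℕ × ℕ, alp c (p.1 + p.2 + 1) * a ^ p.1 * b ^ (p.2 + 1) := by
    rw [← hG.tsum_prod]
    rw [← (Equiv.prodComm ℕ ℕ).tsum_eq]
    exact tsum_congr fun p => key p.1 p.2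
  rw [hiter]
  -- sigma/antidiagonal rearrangement
  have hsig : Summable (fun x : Σ n : ℕ, Finset.HasAntidiagonal.antidiagonal n =>
      alp c ((x.2 : ℕ × ℕ).1 + (x.2 : ℕ × ℕ).2 + 1) * a ^ (x.2 : ℕ × ℕ).1
        * b ^ ((x.2 : ℕ × ℕ).2 + 1)) :=
    hsigma_norm.of_norm
  have hdiag : (∑' p : ℕ × ℕ, alp c (p.1 + p.2 + 1) * a ^ p.1 * b ^ (p.2 + 1))
      = ∑' n : ℕ, ∑ p ∈ Finset.HasAntidiagonal.antidiagonal n, alp c (n + 1) * a ^ p.1 * b ^ (p.2 + 1) := by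
    rw [← Finset.HasAntidiagonal.sigmaAntidiagonalEquivProd.tsum_eq
      (f := fun p : ℕ × ℕ => alp c (p.1 + p.2 + 1) * a ^ p.1 * b ^ (p.2 + 1))]
    simp only [Function.comp_def, Finset.HasAntidiagonal.sigmaAntidiagonalEquivProd_apply]
    rw [Summable.tsum_sigma' (fun n => (hasSum_fintype _).summable) hsig]
    refine tsum_congr fun n => ?_
    show (∑' p : { x : ℕ × ℕ // x ∈ Finset.HasAntidiagonal.antidiagonal n },
        alp c ((p : ℕ × ℕ).1 + (p : ℕ × ℕ).2 + 1) * a ^ (p : ℕ × ℕ).1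
          * b ^ ((p : ℕ × ℕ).2 + 1)) = _
    rw [tsum_fintype]
    rw [Finset.sum_coe_sort (Finset.HasAntidiagonal.antidiagonal n)
      (fun p : ℕ × ℕ => alp c (p.1 + p.2 + 1) * a ^ p.1 * b ^ (p.2 + 1))]
    refine Finset.sum_congr rfl fun p hp => ?_
    rw [Finset.HasAntidiagonal.mem_antidiagonal] at hp
    rw [hp]
  rw [hdiag]
  -- evaluate each diagonal
  have hdiag_eval : ∀ n : ℕ,
      ∑ p ∈ Finset.HasAntidiagonal.antidiagonal n, alp c (n + 1) * a ^ p.1 * b ^ (p.2 + 1)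
        = (b / (a - b)) * (alp c (n + 1) * a ^ (n + 1))
          - (b / (a - b)) * (alp c (n + 1) * b ^ (n + 1)) := by
    intro n
    have hgeom : (∑ i ∈ Finset.range (n + 1), a ^ i * b ^ (n - i)) * (a - b)
        = a ^ (n + 1) - b ^ (n + 1) := by
      have := geom_sum₂_mul a b (n + 1)
      simpa using this
    have hsum : ∑ p ∈ Finset.HasAntidiagonal.antidiagonal n, a ^ p.1 * b ^ p.2
        = ∑ i ∈ Finset.range (n + 1), a ^ i * b ^ (n - i) :=
      Finset.Nat.sum_antidiagonal_eq_sum_range_succ (fun k l => a ^ k * b ^ l) n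
    have hterm : ∀ p : ℕ × ℕ, alp c (n + 1) * a ^ p.1 * b ^ (p.2 + 1)
        = (alp c (n + 1) * b) * (a ^ p.1 * b ^ p.2) := by
      intro p; rw [pow_succ]; ring
    calc ∑ p ∈ Finset.HasAntidiagonal.antidiagonal n, alp c (n + 1) * a ^ p.1 * b ^ (p.2 + 1)
        = (alp c (n + 1) * b) * ∑ p ∈ Finset.HasAntidiagonal.antidiagonal n, a ^ p.1 * b ^ p.2 := by
          rw [Finset.mul_sum]; exact Finset.sum_congr rfl fun p _ => hterm p
      _ = (alp c (n + 1) * b) * ((a ^ (n + 1) - b ^ (n + 1)) / (a - b)) := by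
          rw [hsum]
          congr 1
          rw [eq_div_iff hab]
          exact hgeom
      _ = (b / (a - b)) * (alp c (n + 1) * a ^ (n + 1))
          - (b / (a - b)) * (alp c (n + 1) * b ^ (n + 1)) := by
          field_simp
  have hA := hasSum_alp_succ c a ha
  have hB := hasSum_alp_succ c b hb
  have htot : HasSum (fun n : ℕ =>
      (b / (a - b)) * (alp c (n + 1) * a ^ (n + 1))
        - (b / (a - b)) * (alp c (n + 1) * b ^ (n + 1)))
      ((b / (a - b)) * ((Complex.exp (c * a) - 1) / a + Complex.exp (c * a) - (c + 1))
        - (b / (a - b)) * ((Complex.exp (c * b) - 1) / b + Complex.exp (c * b) - (c + 1))) :=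
    (hA.mul_left _).sub (hB.mul_left _)
  have : (∑' n : ℕ, ∑ p ∈ Finset.HasAntidiagonal.antidiagonal n, alp c (n + 1) * a ^ p.1 * b ^ (p.2 + 1))
      = (b / (a - b)) * ((Complex.exp (c * a) - 1) / a + Complex.exp (c * a) - (c + 1))
        - (b / (a - b)) * ((Complex.exp (c * b) - 1) / b + Complex.exp (c * b) - (c + 1)) := by
    rw [tsum_congr hdiag_eval]
    exact htot.tsum_eq
  rw [this]
  have hvu : v - u = b - a := by rw [hb_def, ha_def]; ring
  have hv1 : v + 1 / 2 = b + 1 := by rw [hb_def]; ring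
  have hu1 : u + 1 / 2 = a + 1 := by rw [ha_def]; ring
  rw [hvu, hv1, hu1]
  field_simp
  ring
end

section
/- Let c, c₀ ∈ ℂ and let u ∈ ℂ with u ≠ 1/2 and u ≠ −1/2, and let x ∈ ℂ be such that e^{c·u + c₀}·(u + 1/2) = e^x·(u − 1/2). Then −1/(u − 1/2) + ∑_{l=1}^{∞} ∑_{k=0}^{∞} (c/(1+k+l)! + 1/(k+l)!)·c^{k+l}·(u − 1/2)^{k+l} = e^{x − c/2 − c₀}·( c·(u − 1/2) − 1/(u + 1/2) ). -/
open Finset in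
lemma diag_tsum (f : ℕ → ℂ) (hf : Summable fun p : ℕ × ℕ => f (p.1 + p.2)) :
    ∑' (l : ℕ) (k : ℕ), f (k + l) = ∑' n : ℕ, ((n : ℂ) + 1) * f n := by
  have hswap : Summable fun p : ℕ × ℕ => f (p.2 + p.1) := by
    have := hf.prod_symm
    simpa using this
  have he : Summable fun σ : Σ n : ℕ, (antidiagonal n : Finset (ℕ × ℕ)) =>
      f ((Finset.HasAntidiagonal.sigmaAntidiagonalEquivProd σ).1 + (Finset.HasAntidiagonal.sigmaAntidiagonalEquivProd σ).2) :=
    Finset.HasAntidiagonal.sigmaAntidiagonalEquivProd.summable_iff.mpr hf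
  calc ∑' (l : ℕ) (k : ℕ), f (k + l)
      = ∑' p : ℕ × ℕ, f (p.2 + p.1) := (hswap.tsum_prod).symm
    _ = ∑' p : ℕ × ℕ, f (p.1 + p.2) := tsum_congr fun p => by rw [add_comm]
    _ = ∑' σ : Σ n : ℕ, (antidiagonal n : Finset (ℕ × ℕ)),
          f ((Finset.HasAntidiagonal.sigmaAntidiagonalEquivProd σ).1 + (Finset.HasAntidiagonal.sigmaAntidiagonalEquivProd σ).2) :=
        (Finset.HasAntidiagonal.sigmaAntidiagonalEquivProd.tsum_eq (fun p : ℕ × ℕ => f (p.1 + p.2))).symm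
    _ = ∑' n : ℕ, ∑' x : (antidiagonal n : Finset (ℕ × ℕ)),
          f ((x : ℕ × ℕ).1 + (x : ℕ × ℕ).2) := he.tsum_sigma
    _ = ∑' n : ℕ, ((n : ℂ) + 1) * f n := by
        refine tsum_congr fun n => ?_
        rw [tsum_fintype]
        have h1 : ∀ x : (antidiagonal n : Finset (ℕ × ℕ)),
            f ((x : ℕ × ℕ).1 + (x : ℕ × ℕ).2) = f n := fun x => by
          rw [Finset.HasAntidiagonal.mem_antidiagonal.mp x.2]
        rw [Finset.sum_congr rfl fun x _ => h1 x, Finset.sum_const, Finset.card_univ,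
          Fintype.card_coe, Nat.card_antidiagonal, nsmul_eq_mul]
        push_cast
        ring

lemma summable_diag (c z : ℂ) :
    Summable fun p : ℕ × ℕ =>
      (c / (((p.1 + p.2 + 1) + 1).factorial : ℂ) + 1 / (((p.1 + p.2 + 1)).factorial : ℂ)) *
        z ^ (p.1 + p.2 + 1) := by
  set a := ‖z‖ with ha
  have hsum : Summable fun p : ℕ × ℕ =>
      ((‖c‖ + 1) * a) * (a ^ p.1 / p.1.factorial * (a ^ p.2 / p.2.factorial)) :=
    (((Real.summable_pow_div_factorial a).mul_of_nonneg (Real.summable_pow_div_factorial a)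
      (fun k => by positivity) (fun l => by positivity))).mul_left _
  apply Summable.of_norm_bounded hsum
  rintro ⟨k, l⟩
  simp only
  set n := k + l + 1 with hn
  have hfpos : (0 : ℝ) < (n.factorial : ℝ) := by exact_mod_cast n.factorial_pos
  have hfpos' : (0 : ℝ) < ((n + 1).factorial : ℝ) := by exact_mod_cast (n + 1).factorial_pos
  have h1 : ‖(c / ((n + 1).factorial : ℂ) + 1 / ((n).factorial : ℂ)) * z ^ n‖
      ≤ (‖c‖ + 1) * (a ^ n / n.factorial) := by
    rw [norm_mul, norm_pow]
    have hb : ‖c / ((n + 1).factorial : ℂ) + 1 / ((n).factorial : ℂ)‖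
        ≤ (‖c‖ + 1) / n.factorial := by
      refine (norm_add_le _ _).trans ?_
      rw [norm_div, norm_div, norm_one]
      simp only [Complex.norm_natCast]
      have h2 : ‖c‖ / ((n + 1).factorial : ℝ) ≤ ‖c‖ / (n.factorial : ℝ) := by
        apply div_le_div_of_nonneg_left (norm_nonneg c) hfpos
        exact_mod_cast Nat.factorial_le (Nat.le_succ n)
      calc ‖c‖ / ((n + 1).factorial : ℝ) + 1 / (n.factorial : ℝ)
          ≤ ‖c‖ / (n.factorial : ℝ) + 1 / (n.factorial : ℝ) := by linarith
        _ = (‖c‖ + 1) / n.factorial := by ring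
    calc ‖c / ((n + 1).factorial : ℂ) + 1 / ((n).factorial : ℂ)‖ * a ^ n
        ≤ ((‖c‖ + 1) / n.factorial) * a ^ n := by
          exact mul_le_mul_of_nonneg_right hb (by positivity)
      _ = (‖c‖ + 1) * (a ^ n / n.factorial) := by ring
  refine h1.trans ?_
  have hfact : ((k.factorial * l.factorial : ℕ) : ℝ) ≤ (n.factorial : ℝ) := by
    exact_mod_cast le_trans
      (Nat.le_of_dvd (k + l).factorial_pos (Nat.factorial_mul_factorial_dvd_factorial_add k l))
      (Nat.factorial_le (Nat.le_succ _))
  have hkl : (0 : ℝ) < ((k.factorial * l.factorial : ℕ) : ℝ) := by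
    exact_mod_cast Nat.mul_pos k.factorial_pos l.factorial_pos
  have key : a ^ n / (n.factorial : ℝ) ≤ a * (a ^ k / k.factorial) * (a ^ l / l.factorial) := by
    have : a * (a ^ k / k.factorial) * (a ^ l / l.factorial)
        = a ^ n / ((k.factorial * l.factorial : ℕ) : ℝ) := by
      rw [hn, pow_succ, pow_add]
      push_cast
      ring
    rw [this]
    exact div_le_div_of_nonneg_left (by positivity) hkl hfact
  calc (‖c‖ + 1) * (a ^ n / n.factorial)
      ≤ (‖c‖ + 1) * (a * (a ^ k / k.factorial) * (a ^ l / l.factorial)) := by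
        exact mul_le_mul_of_nonneg_left key (by positivity)
    _ = ((‖c‖ + 1) * a) * (a ^ k / k.factorial * (a ^ l / l.factorial)) := by ring

theorem stmt_11 (c c₀ u x : ℂ) (hu : u ≠ 1 / 2) (hu' : u ≠ -(1 / 2))
    (hJ : Complex.exp (c * u + c₀) * (u + 1 / 2) = Complex.exp x * (u - 1 / 2)) :
    -(1 / (u - 1 / 2)) +
        ∑' l : ℕ, ∑' k : ℕ,
          (c / (Nat.factorial (1 + k + (l + 1)) : ℂ) +
              1 / (Nat.factorial (k + (l + 1)) : ℂ)) *
            c ^ (k + (l + 1)) * (u - 1 / 2) ^ (k + (l + 1)) =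
      Complex.exp (x - c / 2 - c₀) * (c * (u - 1 / 2) - 1 / (u + 1 / 2)) := by
  set v := u - 1 / 2 with hv_def
  have hv : v ≠ 0 := sub_ne_zero.mpr hu
  have hw : u + 1 / 2 ≠ 0 := fun h => hu' (add_eq_zero_iff_eq_neg.mp h)
  have hu1 : u + 1 / 2 = v + 1 := by rw [hv_def]; ring
  have hw1 : v + 1 ≠ 0 := hu1 ▸ hw
  set z := c * v with hz_def
  set g : ℕ → ℂ := fun n => (c / ((n + 1).factorial : ℂ) + 1 / (n.factorial : ℂ)) * z ^ n
    with hg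
  clear_value v z g
  have hsum : Summable fun p : ℕ × ℕ => g (p.1 + p.2 + 1) := by
    simp only [hg]
    exact summable_diag c z
  have hsummand : ∀ l k : ℕ,
      (c / (Nat.factorial (1 + k + (l + 1)) : ℂ) + 1 / (Nat.factorial (k + (l + 1)) : ℂ)) *
        c ^ (k + (l + 1)) * v ^ (k + (l + 1)) = g (k + l + 1) := by
    intro l k
    have h1 : 1 + k + (l + 1) = (k + l + 1) + 1 := by omega
    have h2 : k + (l + 1) = k + l + 1 := by omega
    rw [h1, h2]
    simp only [hg]
    rw [mul_assoc, ← mul_pow, ← hz_def]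
  have hre : (∑' l : ℕ, ∑' k : ℕ,
      (c / (Nat.factorial (1 + k + (l + 1)) : ℂ) + 1 / (Nat.factorial (k + (l + 1)) : ℂ)) *
        c ^ (k + (l + 1)) * v ^ (k + (l + 1))) = ∑' n : ℕ, ((n : ℂ) + 1) * g (n + 1) := by
    rw [← diag_tsum (fun n => g (n + 1)) hsum]
    exact tsum_congr fun l => tsum_congr fun k => hsummand l k
  rw [hre]
  -- exponential series facts
  have S0 : Summable fun n : ℕ => z ^ n / (n.factorial : ℂ) :=
    NormedSpace.expSeries_div_summable z
  have hE0 : ∑' n : ℕ, z ^ n / (n.factorial : ℂ) = Complex.exp z := by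
    rw [Complex.exp_eq_exp_ℂ]
    exact (NormedSpace.expSeries_div_hasSum_exp z).tsum_eq
  have S1 : Summable fun n : ℕ => z ^ (n + 1) / ((n + 1).factorial : ℂ) :=
    (summable_nat_add_iff (f := fun n : ℕ => z ^ n / (n.factorial : ℂ)) 1).mpr S0
  have S2 : Summable fun n : ℕ => z ^ (n + 2) / ((n + 2).factorial : ℂ) :=
    (summable_nat_add_iff (f := fun n : ℕ => z ^ n / (n.factorial : ℂ)) 2).mpr S0
  have hE1 : ∑' n : ℕ, z ^ (n + 1) / ((n + 1).factorial : ℂ) = Complex.exp z - 1 := by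
    have h := Summable.tsum_eq_zero_add S0
    simp only [pow_zero, Nat.factorial_zero, Nat.cast_one, div_one] at h
    rw [hE0] at h
    linear_combination -h
  have hE2 : ∑' n : ℕ, z ^ (n + 2) / ((n + 2).factorial : ℂ) = Complex.exp z - 1 - z := by
    have h := Summable.tsum_eq_zero_add S1
    simp only [pow_one, Nat.factorial_one, Nat.cast_one, div_one, zero_add] at h
    rw [hE1] at h
    linear_combination -h
  have hpt : ∀ n : ℕ, ((n : ℂ) + 1) * g (n + 1) =
      c * (z ^ (n + 1) / ((n + 1).factorial : ℂ))
        - (1 / v) * (z ^ (n + 2) / ((n + 2).factorial : ℂ))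
        + z * (z ^ n / (n.factorial : ℂ)) := by
    intro n
    have hnf : (n.factorial : ℂ) ≠ 0 := Nat.cast_ne_zero.mpr n.factorial_pos.ne'
    have hn1 : ((n : ℂ) + 1) ≠ 0 := Nat.cast_add_one_ne_zero n
    have hn2 : ((n : ℂ) + 2) ≠ 0 := by
      have : ((n + 2 : ℕ) : ℂ) ≠ 0 := Nat.cast_ne_zero.mpr (by omega)
      push_cast at this
      exact this
    have h1 : (((n + 1).factorial : ℕ) : ℂ) = ((n : ℂ) + 1) * (n.factorial : ℂ) := by
      rw [Nat.factorial_succ]; push_cast; ring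
    have h2 : (((n + 2).factorial : ℕ) : ℂ) = ((n : ℂ) + 2) * (((n + 1).factorial : ℕ) : ℂ) := by
      rw [show n + 2 = (n + 1) + 1 from rfl, Nat.factorial_succ (n + 1)]; push_cast; ring
    have hz2 : z ^ (n + 2) = z ^ (n + 1) * (c * v) := by rw [hz_def, pow_succ]
    have hF1 : (((n + 1).factorial : ℕ) : ℂ) ≠ 0 := Nat.cast_ne_zero.mpr (n + 1).factorial_pos.ne'
    have hF2 : (((n + 2).factorial : ℕ) : ℂ) ≠ 0 := Nat.cast_ne_zero.mpr (n + 2).factorial_pos.ne'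
    have e1 : (1 / v) * (z ^ (n + 2) / (((n + 2).factorial : ℕ) : ℂ))
        = c * z ^ (n + 1) / (((n + 2).factorial : ℕ) : ℂ) := by
      rw [hz2]
      field_simp
    rw [e1]
    simp only [hg]
    rw [show (n + 1) + 1 = n + 2 from rfl, h2, h1, pow_succ z n]
    have cA : ((n : ℂ) + 1) * ((n : ℂ) + 1)⁻¹ = 1 := mul_inv_cancel₀ hn1
    have cB : ((n : ℂ) + 2) * ((n : ℂ) + 2)⁻¹ = 1 := mul_inv_cancel₀ hn2
    simp only [div_eq_mul_inv, mul_inv]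
    linear_combination (z ^ n * z) * ((n.factorial : ℕ) : ℂ)⁻¹ * cA +
      c * (z ^ n * z) * ((n : ℂ) + 1)⁻¹ * ((n.factorial : ℕ) : ℂ)⁻¹ * cB
  rw [tsum_congr hpt,
    Summable.tsum_add ((S1.mul_left c).sub (S2.mul_left (1 / v))) (S0.mul_left z),
    Summable.tsum_sub (S1.mul_left c) (S2.mul_left (1 / v)),
    tsum_mul_left, tsum_mul_left, tsum_mul_left, hE0, hE1, hE2]
  -- use the hypothesis hJ
  have hE' : Complex.exp (x - c / 2 - c₀) * v = Complex.exp z * (v + 1) := by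
    have hcu : c * u + c₀ = z + (c / 2 + c₀) := by rw [hz_def, hv_def]; ring
    have hx : Complex.exp x = Complex.exp (x - c / 2 - c₀) * Complex.exp (c / 2 + c₀) := by
      rw [← Complex.exp_add]; ring_nf
    rw [hcu, Complex.exp_add, hx, hu1] at hJ
    have hne := Complex.exp_ne_zero (c / 2 + c₀)
    have h2 : Complex.exp (c / 2 + c₀) *
        (Complex.exp (x - c / 2 - c₀) * v - Complex.exp z * (v + 1)) = 0 := by
      linear_combination -hJ
    rcases mul_eq_zero.mp h2 with h | h
    · exact absurd h hne
    · exact sub_eq_zero.mp h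
  have hE'' : Complex.exp (x - c / 2 - c₀) = Complex.exp z * (v + 1) / v := by
    rw [eq_div_iff hv]; exact hE'
  rw [hu1, hE'', hz_def]
  field_simp
  ring
end

section
/- Let c ∈ ℂ and let u, v ∈ ℂ satisfy u ≠ v, u ∉ {1/2, −1/2}, v ∉ {1/2, −1/2}, and suppose e^{c·u}·(u + 1/2)·(v − 1/2) = e^{c·v}·(v + 1/2)·(u − 1/2). Then ∑_{l=1}^{∞} ∑_{k=0}^{∞} (c/(1+k+l)! + 1/(k+l)!)·c^{k+l}·(u − 1/2)^k·(v − 1/2)^l = 1/(u − 1/2). -/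
set_option maxHeartbeats 1000000

open Finset Nat

private lemma hasSum_exp_aux (z : ℂ) :
    HasSum (fun n : ℕ => z ^ n / (n ! : ℂ)) (Complex.exp z) := by
  have hs : Summable (fun n : ℕ => z ^ n / (n ! : ℂ)) := by
    apply Summable.of_norm
    simpa [norm_div, norm_pow] using Real.summable_pow_div_factorial ‖z‖
  have h : Complex.exp z = ∑' n : ℕ, z ^ n / (n ! : ℂ) := by
    rw [Complex.exp_eq_exp_ℂ, NormedSpace.exp_eq_tsum_div]
  exact h ▸ hs.hasSum

private lemma hasSum_exp_aux1 (z : ℂ) :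
    HasSum (fun n : ℕ => z ^ (n + 1) / ((n + 1)! : ℂ)) (Complex.exp z - 1) := by
  have h := (hasSum_nat_add_iff' (f := fun n : ℕ => z ^ n / (n ! : ℂ)) 1).2 (hasSum_exp_aux z)
  simp only [range_one, sum_singleton, pow_zero, Nat.factorial_zero, Nat.cast_one, div_one] at h
  exact h

private lemma hasSum_exp_aux2 (z : ℂ) :
    HasSum (fun n : ℕ => z ^ (n + 2) / ((n + 2)! : ℂ)) (Complex.exp z - 1 - z) := by
  have h := (hasSum_nat_add_iff' (f := fun n : ℕ => z ^ (n + 1) / ((n + 1)! : ℂ)) 1).2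
    (hasSum_exp_aux1 z)
  simp only [range_one, sum_singleton, pow_one, Nat.factorial_one, Nat.cast_one, div_one,
    zero_add] at h
  exact h

private lemma hasSum_G (c x : ℂ) (hx : x ≠ 0) :
    HasSum (fun n : ℕ => (c / ((n + 2)! : ℂ) + 1 / ((n + 1)! : ℂ)) * c ^ (n + 1) * x ^ (n + 1))
      (x⁻¹ * (Complex.exp (c * x) - 1 - c * x) + (Complex.exp (c * x) - 1)) := by
  have h1 := (hasSum_exp_aux2 (c * x)).mul_left x⁻¹
  have h2 := hasSum_exp_aux1 (c * x)
  have h := h1.add h2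
  convert h using 2 with n
  · rfl
  have hf2 : ((n + 2)! : ℂ) ≠ 0 := Nat.cast_ne_zero.2 (Nat.factorial_ne_zero _)
  have hf1 : ((n + 1)! : ℂ) ≠ 0 := Nat.cast_ne_zero.2 (Nat.factorial_ne_zero _)
  field_simp
  ring

private lemma core_aux (c a b : ℂ) (ha : a ≠ 0) (hb : b ≠ 0) (hba : b - a ≠ 0)
    (hkey : Complex.exp (c * a) * (a + 1) * b = Complex.exp (c * b) * (b + 1) * a) :
    ∑' l : ℕ, ∑' k : ℕ,
        (c / (Nat.factorial (1 + k + (l + 1)) : ℂ) +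
            1 / (Nat.factorial (k + (l + 1)) : ℂ)) *
          c ^ (k + (l + 1)) * a ^ k * b ^ (l + 1) = 1 / a := by
  classical
  set F : ℕ × ℕ → ℂ := fun p =>
    (c / (Nat.factorial (1 + p.2 + (p.1 + 1)) : ℂ) +
        1 / (Nat.factorial (p.2 + (p.1 + 1)) : ℂ)) *
      c ^ (p.2 + (p.1 + 1)) * a ^ p.2 * b ^ (p.1 + 1) with hF_def
  -- summability
  have hF : Summable F := by
    apply Summable.of_norm
    have hsum : Summable fun p : ℕ × ℕ =>
        ((‖c‖ + 1) * ‖c‖ * ‖b‖) *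
          ((‖c‖ * ‖b‖) ^ p.1 / p.1 ! * ((‖c‖ * ‖a‖) ^ p.2 / p.2 !)) := by
      apply Summable.mul_left
      exact Summable.mul_of_nonneg (Real.summable_pow_div_factorial _)
        (Real.summable_pow_div_factorial _)
        (fun n => by positivity) (fun n => by positivity)
    apply Summable.of_nonneg_of_le (fun p => norm_nonneg _) _ hsum
    rintro ⟨l, k⟩
    have e1 : 1 + k + (l + 1) = (k + (l + 1)) + 1 := by omega
    have hfacN : k ! * l ! ≤ (k + (l + 1))! :=
      (Nat.le_of_dvd (Nat.factorial_pos _)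
        (Nat.factorial_mul_factorial_dvd_factorial_add k l)).trans
        (Nat.factorial_le (by omega))
    have hfacR : (k ! : ℝ) * l ! ≤ ((k + (l + 1))! : ℝ) := by exact_mod_cast hfacN
    have hfacR' : (k ! : ℝ) * l ! ≤ (((k + (l + 1)) + 1)! : ℝ) :=
      hfacR.trans (by exact_mod_cast Nat.factorial_le (Nat.le_succ _))
    have hklpos : (0 : ℝ) < (k ! : ℝ) * l ! := by positivity
    simp only [hF_def]
    rw [e1]
    have step1 : ‖(c / (((k + (l + 1)) + 1)! : ℂ) + 1 / (((k + (l + 1)))! : ℂ)) *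
          c ^ (k + (l + 1)) * a ^ k * b ^ (l + 1)‖
        ≤ ((‖c‖ + 1) / ((k ! : ℝ) * l !)) * ‖c‖ ^ (k + (l + 1)) * ‖a‖ ^ k * ‖b‖ ^ (l + 1) := by
      simp only [norm_mul, norm_pow]
      have hco : ‖c / (((k + (l + 1)) + 1)! : ℂ) + 1 / (((k + (l + 1)))! : ℂ)‖
          ≤ (‖c‖ + 1) / ((k ! : ℝ) * l !) := by
        have t1 : ‖c / (((k + (l + 1)) + 1)! : ℂ)‖ ≤ ‖c‖ / ((k ! : ℝ) * l !) := by
          rw [norm_div]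
          simp only [Complex.norm_natCast]
          gcongr
        have t2 : ‖(1 : ℂ) / (((k + (l + 1)))! : ℂ)‖ ≤ 1 / ((k ! : ℝ) * l !) := by
          rw [norm_div, norm_one]
          simp only [Complex.norm_natCast]
          gcongr
        calc ‖c / (((k + (l + 1)) + 1)! : ℂ) + 1 / (((k + (l + 1)))! : ℂ)‖
            ≤ ‖c / (((k + (l + 1)) + 1)! : ℂ)‖ + ‖(1 : ℂ) / (((k + (l + 1)))! : ℂ)‖ :=
              norm_add_le _ _
          _ ≤ ‖c‖ / ((k ! : ℝ) * l !) + 1 / ((k ! : ℝ) * l !) := add_le_add t1 t2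
          _ = (‖c‖ + 1) / ((k ! : ℝ) * l !) := by ring
      gcongr
    refine step1.trans (le_of_eq ?_)
    have hk : (k ! : ℝ) ≠ 0 := by positivity
    have hl : (l ! : ℝ) ≠ 0 := by positivity
    field_simp
    ring
  have hF1 : ∀ l : ℕ, Summable fun k => F (l, k) := fun l => hF.prod_factor l
  have hstep1 : (∑' l : ℕ, ∑' k : ℕ,
      (c / (Nat.factorial (1 + k + (l + 1)) : ℂ) +
          1 / (Nat.factorial (k + (l + 1)) : ℂ)) *
        c ^ (k + (l + 1)) * a ^ k * b ^ (l + 1)) = ∑' p : ℕ × ℕ, F p :=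
    (Summable.tsum_prod' hF hF1).symm
  have hsig : Summable (F ∘ Finset.HasAntidiagonal.sigmaAntidiagonalEquivProd) :=
    Finset.HasAntidiagonal.sigmaAntidiagonalEquivProd.summable_iff.2 hF
  have hstep2 : ∑' p : ℕ × ℕ, F p = ∑' n : ℕ, ∑ kl ∈ Finset.HasAntidiagonal.antidiagonal n, F kl := by
    conv_rhs => congr; ext; rw [← Finset.sum_finset_coe, ← tsum_fintype (L := .unconditional _)]
    rw [← Finset.HasAntidiagonal.sigmaAntidiagonalEquivProd.tsum_eq F]
    exact Summable.tsum_sigma' (fun n => (hasSum_fintype _).summable) hsig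
  have hdiag : ∀ n : ℕ, (∑ kl ∈ Finset.HasAntidiagonal.antidiagonal n, F kl)
      = b / (b - a) * ((c / ((n + 2)! : ℂ) + 1 / ((n + 1)! : ℂ)) * c ^ (n + 1) * b ^ (n + 1)
          - (c / ((n + 2)! : ℂ) + 1 / ((n + 1)! : ℂ)) * c ^ (n + 1) * a ^ (n + 1)) := by
    intro n
    rw [Finset.Nat.sum_antidiagonal_eq_sum_range_succ_mk]
    simp only [Nat.succ_eq_add_one]
    have hterm : ∀ i ∈ Finset.range (n + 1), F (i, n - i)
        = ((c / ((n + 2)! : ℂ) + 1 / ((n + 1)! : ℂ)) * c ^ (n + 1) * b) *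
            (b ^ i * a ^ (n - i)) := by
      intro i hi
      have hi' : i ≤ n := Nat.lt_succ_iff.1 (Finset.mem_range.1 hi)
      have h1 : (n - i) + (i + 1) = n + 1 := by omega
      have h2 : 1 + (n - i) + (i + 1) = n + 2 := by omega
      simp only [hF_def]
      rw [h1, h2]
      ring
    rw [Finset.sum_congr rfl hterm, ← Finset.mul_sum]
    have hgeom : (∑ i ∈ Finset.range (n + 1), b ^ i * a ^ (n - i)) * (b - a)
        = b ^ (n + 1) - a ^ (n + 1) := by
      have h := geom_sum₂_mul b a (n + 1)
      simpa using h
    rw [show b / (b - a) * ((c / ((n + 2)! : ℂ) + 1 / ((n + 1)! : ℂ)) * c ^ (n + 1) * b ^ (n + 1)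
          - (c / ((n + 2)! : ℂ) + 1 / ((n + 1)! : ℂ)) * c ^ (n + 1) * a ^ (n + 1))
        = b * ((c / ((n + 2)! : ℂ) + 1 / ((n + 1)! : ℂ)) * c ^ (n + 1) * b ^ (n + 1)
          - (c / ((n + 2)! : ℂ) + 1 / ((n + 1)! : ℂ)) * c ^ (n + 1) * a ^ (n + 1)) / (b - a)
      from by ring, eq_div_iff hba]
    linear_combination ((c / ((n + 2)! : ℂ) + 1 / ((n + 1)! : ℂ)) * c ^ (n + 1) * b) * hgeom
  rw [hstep1, hstep2, tsum_congr hdiag]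
  set Ea : ℂ := Complex.exp (c * a) with hEa_def
  set Eb : ℂ := Complex.exp (c * b) with hEb_def
  have hGa : HasSum (fun n : ℕ =>
      (c / ((n + 2)! : ℂ) + 1 / ((n + 1)! : ℂ)) * c ^ (n + 1) * a ^ (n + 1))
      (a⁻¹ * (Ea - 1 - c * a) + (Ea - 1)) := hasSum_G c a ha
  have hGb : HasSum (fun n : ℕ =>
      (c / ((n + 2)! : ℂ) + 1 / ((n + 1)! : ℂ)) * c ^ (n + 1) * b ^ (n + 1))
      (b⁻¹ * (Eb - 1 - c * b) + (Eb - 1)) := hasSum_G c b hb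
  have hfin := ((hGb.sub hGa).mul_left (b / (b - a))).tsum_eq
  rw [hfin]
  have hainv : a * a⁻¹ = 1 := mul_inv_cancel₀ ha
  have hbinv : b * b⁻¹ = 1 := mul_inv_cancel₀ hb
  have hV2 : a * b * ((b⁻¹ * (Eb - 1 - c * b) + (Eb - 1))
      - (a⁻¹ * (Ea - 1 - c * a) + (Ea - 1))) = b - a := by
    linear_combination (-1 : ℂ) * hkey + (a * (Eb - 1 - c * b)) * hbinv
      - (b * (Ea - 1 - c * a)) * hainv
  have hD : (b⁻¹ * (Eb - 1 - c * b) + (Eb - 1)) - (a⁻¹ * (Ea - 1 - c * a) + (Ea - 1))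
      = (b - a) / (a * b) := by
    rw [eq_div_iff (mul_ne_zero ha hb)]
    linear_combination hV2
  rw [hD]
  field_simp

theorem stmt_12 (c u v : ℂ) (huv : u ≠ v)
    (hu : u ≠ 1 / 2) (hu' : u ≠ -(1 / 2)) (hv : v ≠ 1 / 2) (hv' : v ≠ -(1 / 2))
    (hJ : Complex.exp (c * u) * (u + 1 / 2) * (v - 1 / 2) =
      Complex.exp (c * v) * (v + 1 / 2) * (u - 1 / 2)) :
    ∑' l : ℕ, ∑' k : ℕ,
        (c / (Nat.factorial (1 + k + (l + 1)) : ℂ) +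
            1 / (Nat.factorial (k + (l + 1)) : ℂ)) *
          c ^ (k + (l + 1)) * (u - 1 / 2) ^ k * (v - 1 / 2) ^ (l + 1) =
      1 / (u - 1 / 2) := by
  have ha : u - 1 / 2 ≠ 0 := sub_ne_zero.2 hu
  have hb : v - 1 / 2 ≠ 0 := sub_ne_zero.2 hv
  have hba : (v - 1 / 2) - (u - 1 / 2) ≠ 0 := by
    intro h
    exact huv (by linear_combination -h)
  have h1 : Complex.exp (c * u) = Complex.exp (c * (u - 1 / 2)) * Complex.exp (c * (1 / 2)) := by
    rw [← Complex.exp_add]; congr 1; ring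
  have h2 : Complex.exp (c * v) = Complex.exp (c * (v - 1 / 2)) * Complex.exp (c * (1 / 2)) := by
    rw [← Complex.exp_add]; congr 1; ring
  have hE : Complex.exp (c * (1 / 2)) ≠ 0 := Complex.exp_ne_zero _
  have hkey : Complex.exp (c * (u - 1 / 2)) * ((u - 1 / 2) + 1) * (v - 1 / 2)
      = Complex.exp (c * (v - 1 / 2)) * ((v - 1 / 2) + 1) * (u - 1 / 2) := by
    apply mul_right_cancel₀ hE
    linear_combination hJ - ((u + 1 / 2) * (v - 1 / 2)) * h1 + ((v + 1 / 2) * (u - 1 / 2)) * h2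
  exact core_aux c (u - 1 / 2) (v - 1 / 2) ha hb hba hkey
end

section
/- Let n, m be positive integers with m ≤ n. Let P₀, …, P_{n+m} : ℝ → ℝ and Q₀, …, Q_n : ℝ → ℝ be functions, and let real coefficients a_{j,k} (0 ≤ j ≤ n−1, 0 ≤ k ≤ n) and b_{j,k} (0 ≤ j ≤ n−1, 0 ≤ k ≤ n+m) be given such that a_{j,k} = 0 whenever k > j+1, b_{j,k} = 0 whenever k > j+m, and for every j with 0 ≤ j ≤ n−1 and all u, v ∈ ℝ: e^v·Q_j(v) = ∑_{k=0}^{n} a_{j,k}·Q_k(v) and E_m(u)·P_j(u) = ∑_{k=0}^{n+m} b_{j,k}·P_k(u), where E_m(u) = ∑_{i=0}^{m} u^i/i!. Then for all u, v ∈ ℝ: (E_m(u) − e^v)·∑_{k=0}^{n−1} P_k(u)Q_k(v) = ∑_{j=0}^{n−1} ∑_{k=0}^{n−1} (b_{k,j} − a_{j,k})·P_j(u)Q_k(v) + ∑_{j=n−m}^{n−1} ∑_{k=n}^{j+m} b_{j,k}·P_k(u)Q_j(v) − a_{n−1,n}·P_{n−1}(u)Q_n(v). -/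
theorem stmt_14 (n m : ℕ) (hn : 0 < n) (hm : 0 < m) (hmn : m ≤ n)
    (P Q : ℕ → ℝ → ℝ) (a b : ℕ → ℕ → ℝ)
    (ha0 : ∀ j k, j ≤ n - 1 → k ≤ n → k > j + 1 → a j k = 0)
    (hb0 : ∀ j k, j ≤ n - 1 → k ≤ n + m → k > j + m → b j k = 0)
    (haQ : ∀ j, j ≤ n - 1 → ∀ v : ℝ,
      Real.exp v * Q j v = ∑ k ∈ Finset.range (n + 1), a j k * Q k v)
    (hbP : ∀ j, j ≤ n - 1 → ∀ u : ℝ,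
      (∑ i ∈ Finset.range (m + 1), u ^ i / (Nat.factorial i : ℝ)) * P j u =
        ∑ k ∈ Finset.range (n + m + 1), b j k * P k u) :
    ∀ u v : ℝ,
      ((∑ i ∈ Finset.range (m + 1), u ^ i / (Nat.factorial i : ℝ)) - Real.exp v) *
          ∑ k ∈ Finset.range n, P k u * Q k v =
        (∑ j ∈ Finset.range n, ∑ k ∈ Finset.range n, (b k j - a j k) * P j u * Q k v) +
          (∑ j ∈ Finset.Icc (n - m) (n - 1), ∑ k ∈ Finset.Icc n (j + m),
            b j k * P k u * Q j v) -
          a (n - 1) n * P (n - 1) u * Q n v := by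
  intro u v
  set E := ∑ i ∈ Finset.range (m + 1), u ^ i / (Nat.factorial i : ℝ) with hE
  -- Lemma B: expansion of exp v * S
  have hB : Real.exp v * ∑ k ∈ Finset.range n, P k u * Q k v
      = (∑ j ∈ Finset.range n, ∑ k ∈ Finset.range n, a j k * P j u * Q k v)
        + a (n-1) n * P (n-1) u * Q n v := by
    rw [Finset.mul_sum]
    have step : ∀ k ∈ Finset.range n,
        Real.exp v * (P k u * Q k v)
          = (∑ k' ∈ Finset.range n, a k k' * P k u * Q k' v)
            + a k n * P k u * Q n v := by
      intro k hk
      have hk' : k ≤ n - 1 := by have := Finset.mem_range.mp hk; omega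
      have h1 : Real.exp v * (P k u * Q k v) = P k u * (Real.exp v * Q k v) := by ring
      rw [h1, haQ k hk' v, Finset.mul_sum, Finset.sum_range_succ]
      rw [Finset.sum_congr rfl (fun k' _ => by ring : ∀ k' ∈ Finset.range n,
        P k u * (a k k' * Q k' v) = a k k' * P k u * Q k' v)]
      ring
    rw [Finset.sum_congr rfl step, Finset.sum_add_distrib]
    congr 1
    rw [Finset.sum_eq_single (n-1)]
    · intro x hx hxne
      have hx' : x < n := Finset.mem_range.mp hx
      rw [ha0 x n (by omega) le_rfl (by omega)]
      ring
    · intro h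
      exact absurd (Finset.mem_range.mpr (by omega)) h
  -- Lemma A: expansion of E * S
  have hA : E * ∑ k ∈ Finset.range n, P k u * Q k v
      = (∑ j ∈ Finset.range n, ∑ k ∈ Finset.range n, b k j * P j u * Q k v)
        + ∑ j ∈ Finset.Icc (n - m) (n - 1), ∑ k ∈ Finset.Icc n (j + m),
            b j k * P k u * Q j v := by
    rw [Finset.mul_sum]
    have step : ∀ k ∈ Finset.range n,
        E * (P k u * Q k v)
          = (∑ j ∈ Finset.range n, b k j * P j u * Q k v)
            + ∑ j ∈ Finset.Ico n (n+m+1), b k j * P j u * Q k v := by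
      intro k hk
      have hk' : k ≤ n - 1 := by have := Finset.mem_range.mp hk; omega
      have h1 : E * (P k u * Q k v) = (E * P k u) * Q k v := by ring
      rw [h1, hbP k hk' u, Finset.sum_mul]
      rw [Finset.range_eq_Ico,
        ← Finset.sum_Ico_consecutive (fun j => b k j * P j u * Q k v)
          (Nat.zero_le n) (by omega : n ≤ n + m + 1),
        ← Finset.range_eq_Ico]
    rw [Finset.sum_congr rfl step, Finset.sum_add_distrib]
    congr 1
    · exact Finset.sum_comm
    · -- tail sums
      have hsub : Finset.Icc (n - m) (n - 1) ⊆ Finset.range n := by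
        intro x hx
        simp only [Finset.mem_Icc] at hx
        exact Finset.mem_range.mpr (by omega)
      rw [← Finset.sum_subset hsub]
      · apply Finset.sum_congr rfl
        intro k hk
        simp only [Finset.mem_Icc] at hk
        apply (Finset.sum_subset _ _).symm
        · intro j hj
          simp only [Finset.mem_Icc] at hj
          simp only [Finset.mem_Ico]
          omega
        · intro j hj hj'
          simp only [Finset.mem_Ico] at hj
          simp only [Finset.mem_Icc] at hj'
          rw [hb0 k j (by omega) (by omega) (by omega)]
          ring
      · intro k hk hk'
        simp only [Finset.mem_range] at hk
        simp only [Finset.mem_Icc, not_and_or, not_le] at hk'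
        apply Finset.sum_eq_zero
        intro j hj
        simp only [Finset.mem_Ico] at hj
        rw [hb0 k j (by omega) (by omega) (by omega)]
        ring
  rw [sub_mul, hA, hB]
  have hsplit : ∑ j ∈ Finset.range n, ∑ k ∈ Finset.range n,
      (b k j - a j k) * P j u * Q k v
      = (∑ j ∈ Finset.range n, ∑ k ∈ Finset.range n, b k j * P j u * Q k v)
        - ∑ j ∈ Finset.range n, ∑ k ∈ Finset.range n, a j k * P j u * Q k v := by
    rw [← Finset.sum_sub_distrib]
    apply Finset.sum_congr rfl
    intro j _
    rw [← Finset.sum_sub_distrib]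
    apply Finset.sum_congr rfl
    intro k _
    ring
  rw [hsplit]
  ring
end

section
/- Let x₀ ∈ ℝ and let V : ℝ → ℝ be continuously differentiable with V'(x) ≥ 1 for all x ≥ x₀. Let μ be a Borel probability measure on ℝ with compact support contained in [x₀, ∞), such that the functions (x, y) ↦ log|x − y| and (x, y) ↦ log|e^x − e^y| are integrable with respect to μ ⊗ μ. Define I_V(ν) = (1/2)∬ log(1/|x − y|) dν(x)dν(y) + (1/2)∬ log(1/|e^x − e^y|) dν(x)dν(y) + ∫ V dν, and for s ∈ ℝ let μ_s be the pushforward of μ under the translation x ↦ x + s. Then there exists s < 0 such that I_V(μ_s) < I_V(μ). In particular, μ does not minimize I_V among compactly supported Borel probability measures satisfying the integrability hypotheses. -/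
open MeasureTheory

noncomputable def logEnergy (V : ℝ → ℝ) (ν : Measure ℝ) : ℝ :=
  (1 / 2) * ∫ p : ℝ × ℝ, Real.log (1 / |p.1 - p.2|) ∂(ν.prod ν) +
    (1 / 2) * ∫ p : ℝ × ℝ, Real.log (1 / |Real.exp p.1 - Real.exp p.2|) ∂(ν.prod ν) +
    ∫ x, V x ∂ν

/-- Pointwise identity for the exponential log kernel under translation. -/
lemma logexp_shift (s x y : ℝ) :
    Real.log |Real.exp (x + s) - Real.exp (y + s)| =
      Real.log |Real.exp x - Real.exp y| + (if x = y then 0 else s) := by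
  by_cases h : x = y
  · simp [h]
  · have hne : Real.exp x - Real.exp y ≠ 0 := by
      simpa [sub_eq_zero] using fun hc => h (Real.exp_injective hc)
    have hfac : Real.exp (x + s) - Real.exp (y + s) = Real.exp s * (Real.exp x - Real.exp y) := by
      rw [Real.exp_add, Real.exp_add]; ring
    rw [hfac, abs_mul, abs_of_pos (Real.exp_pos s),
      Real.log_mul (ne_of_gt (Real.exp_pos s)) (by simpa [abs_ne_zero] using hne),
      Real.log_exp]
    simp [h, add_comm]

theorem stmt_18 (x₀ : ℝ) (V : ℝ → ℝ) (hV : ContDiff ℝ 1 V)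
    (hV' : ∀ x, x₀ ≤ x → 1 ≤ deriv V x)
    (μ : Measure ℝ) [IsProbabilityMeasure μ]
    (hsupp : ∃ K : Set ℝ, IsCompact K ∧ K ⊆ Set.Ici x₀ ∧ μ Kᶜ = 0)
    (hlog : Integrable (fun p : ℝ × ℝ => Real.log |p.1 - p.2|) (μ.prod μ))
    (hlogexp : Integrable (fun p : ℝ × ℝ => Real.log |Real.exp p.1 - Real.exp p.2|)
      (μ.prod μ)) :
    (∃ s : ℝ, s < 0 ∧ logEnergy V (Measure.map (· + s) μ) < logEnergy V μ) ∧
    ∃ ν : Measure ℝ, IsProbabilityMeasure ν ∧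
      (∃ K : Set ℝ, IsCompact K ∧ ν Kᶜ = 0) ∧
      Integrable (fun p : ℝ × ℝ => Real.log |p.1 - p.2|) (ν.prod ν) ∧
      Integrable (fun p : ℝ × ℝ => Real.log |Real.exp p.1 - Real.exp p.2|) (ν.prod ν) ∧
      logEnergy V ν < logEnergy V μ := by
  classical
  obtain ⟨K, hKc, hKsub, hKnull⟩ := hsupp
  -- continuity of the derivative and lower bound 3/4 near x₀
  have hderivC : Continuous (deriv V) := (hV.continuous_deriv le_rfl)
  have hx₀ : (3/4 : ℝ) < deriv V x₀ := lt_of_lt_of_le (by norm_num) (hV' x₀ le_rfl)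
  obtain ⟨ε, hε, hball⟩ : ∃ ε > 0, ∀ x, |x - x₀| < 2 * ε → (3/4 : ℝ) < deriv V x := by
    have := hderivC.continuousAt (x := x₀)
    obtain ⟨δ, hδ, hδ'⟩ := Metric.continuousAt_iff.mp this (deriv V x₀ - 3/4) (by linarith)
    refine ⟨δ/2, by linarith, fun x hx => ?_⟩
    have := hδ' (show dist x x₀ < δ by simpa [Real.dist_eq] using (by linarith : |x - x₀| < δ))
    rw [Real.dist_eq] at this
    have := abs_lt.mp this
    linarith [this.1]
  have hderiv_ge : ∀ x, x₀ - ε ≤ x → (3/4 : ℝ) ≤ deriv V x := by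
    intro x hx
    rcases le_or_gt x₀ x with h | h
    · linarith [hV' x h]
    · exact le_of_lt (hball x (by rw [abs_lt]; constructor <;> linarith))
  -- monotonicity of V x - 3/4 x on [x₀ - ε, ∞)
  have hdiff : Differentiable ℝ V := hV.differentiable one_ne_zero
  have hmono : MonotoneOn (fun x => V x - 3/4 * x) (Set.Ici (x₀ - ε)) := by
    apply monotoneOn_of_deriv_nonneg (convex_Ici _)
      (Continuous.continuousOn (hV.continuous.sub (by fun_prop)))
    · intro x _
      exact ((hdiff x).sub (by fun_prop)).differentiableWithinAt
    · intro x hx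
      rw [interior_Ici] at hx
      have hd : deriv (fun x => V x - 3/4 * x) x = deriv V x - 3/4 := by
        rw [deriv_fun_sub (hdiff x) (by fun_prop)]
        have h1 : deriv (fun y : ℝ => (3/4 : ℝ) * y) x = 3/4 * deriv (fun y : ℝ => y) x :=
          deriv_const_mul_field _
        simp only [deriv_id'', mul_one] at h1
        rw [show (HMul.hMul (3/4 : ℝ)) = (fun y : ℝ => (3/4 : ℝ) * y) from rfl, h1]
      rw [show (V - HMul.hMul (3/4 : ℝ)) = (fun x => V x - 3/4 * x) from rfl, hd]
      linarith [hderiv_ge x hx.le]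
  set s : ℝ := -ε/2 with hs_def
  have hs_neg : s < 0 := by rw [hs_def]; linarith
  have hVshift : ∀ x, x₀ ≤ x → V (x + s) ≤ V x + 3/4 * s := by
    intro x hx
    have h1 : x + s ∈ Set.Ici (x₀ - ε) := by simp only [Set.mem_Ici, hs_def]; linarith
    have h2 : x ∈ Set.Ici (x₀ - ε) := by simp only [Set.mem_Ici]; linarith
    have := hmono h1 h2 (by linarith)
    simp only at this
    linarith
  -- measure-theoretic setup
  have hTm : Measurable fun x : ℝ => x + s := measurable_add_const s
  haveI hPs : IsProbabilityMeasure (Measure.map (· + s) μ) :=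
    Measure.isProbabilityMeasure_map hTm.aemeasurable
  have hprod : (Measure.map (· + s) μ).prod (Measure.map (· + s) μ)
      = Measure.map (Prod.map (· + s) (· + s)) (μ.prod μ) :=
    Measure.map_prod_map _ _ hTm hTm
  have hm1 : Measurable fun p : ℝ × ℝ => Real.log (1 / |p.1 - p.2|) :=
    Real.measurable_log.comp (measurable_const.div (measurable_fst.sub measurable_snd).abs)
  have hm2 : Measurable fun p : ℝ × ℝ => Real.log (1 / |Real.exp p.1 - Real.exp p.2|) :=
    Real.measurable_log.comp (measurable_const.div
      (((Real.continuous_exp.comp continuous_fst).sub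
        (Real.continuous_exp.comp continuous_snd)).measurable).abs)
  have hDmeas : MeasurableSet {p : ℝ × ℝ | p.1 ≠ p.2} :=
    (isClosed_eq continuous_fst continuous_snd).measurableSet.compl
  set m : ℝ := ((μ.prod μ) {p : ℝ × ℝ | p.1 ≠ p.2}).toReal with hm_def
  have hm_le : m ≤ 1 := by
    have h1 : (μ.prod μ) {p : ℝ × ℝ | p.1 ≠ p.2} ≤ 1 := prob_le_one
    simpa [hm_def] using ENNReal.toReal_mono (by simp) h1
  -- integrabilities
  have hf1_int : Integrable (fun p : ℝ × ℝ => Real.log (1 / |p.1 - p.2|)) (μ.prod μ) := by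
    have he : (fun p : ℝ × ℝ => Real.log (1 / |p.1 - p.2|))
        = fun p : ℝ × ℝ => -Real.log |p.1 - p.2| := by
      funext p; rw [one_div, Real.log_inv]
    rw [he]; exact hlog.neg
  have hf2_int : Integrable (fun p : ℝ × ℝ => Real.log (1 / |Real.exp p.1 - Real.exp p.2|))
      (μ.prod μ) := by
    have he : (fun p : ℝ × ℝ => Real.log (1 / |Real.exp p.1 - Real.exp p.2|))
        = fun p : ℝ × ℝ => -Real.log |Real.exp p.1 - Real.exp p.2| := by
      funext p; rw [one_div, Real.log_inv]
    rw [he]; exact hlogexp.neg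
  have hind_eq : (fun p : ℝ × ℝ => if p.1 = p.2 then (0 : ℝ) else s)
      = Set.indicator {p : ℝ × ℝ | p.1 ≠ p.2} fun _ => s := by
    funext p; by_cases h : p.1 = p.2 <;> simp [Set.indicator_apply, h]
  have hind : Integrable (fun p : ℝ × ℝ => if p.1 = p.2 then (0 : ℝ) else s) (μ.prod μ) := by
    rw [hind_eq]; exact (integrable_const s).indicator hDmeas
  have hind_int : ∫ p : ℝ × ℝ, (if p.1 = p.2 then (0 : ℝ) else s) ∂(μ.prod μ) = m * s := by
    rw [hind_eq, integral_indicator_const s hDmeas, hm_def]; simp [smul_eq_mul, measureReal_def]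
  -- the three integral identities
  have hI1 : ∫ p : ℝ × ℝ, Real.log (1 / |p.1 - p.2|)
        ∂((Measure.map (· + s) μ).prod (Measure.map (· + s) μ))
      = ∫ p : ℝ × ℝ, Real.log (1 / |p.1 - p.2|) ∂(μ.prod μ) := by
    rw [hprod, integral_map (hTm.prodMap hTm).aemeasurable hm1.aestronglyMeasurable]
    simp [Prod.map, add_sub_add_right_eq_sub]
  have hI2 : ∫ p : ℝ × ℝ, Real.log (1 / |Real.exp p.1 - Real.exp p.2|)
        ∂((Measure.map (· + s) μ).prod (Measure.map (· + s) μ))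
      = ∫ p : ℝ × ℝ, Real.log (1 / |Real.exp p.1 - Real.exp p.2|) ∂(μ.prod μ) - s * m := by
    rw [hprod, integral_map (hTm.prodMap hTm).aemeasurable hm2.aestronglyMeasurable]
    have he : (fun p : ℝ × ℝ =>
          Real.log (1 / |Real.exp (Prod.map (· + s) (· + s) p).1
            - Real.exp (Prod.map (· + s) (· + s) p).2|))
        = fun p : ℝ × ℝ => Real.log (1 / |Real.exp p.1 - Real.exp p.2|)
            - (if p.1 = p.2 then (0 : ℝ) else s) := by
      funext p
      have h := logexp_shift s p.1 p.2
      simp only [Prod.map, one_div, Real.log_inv]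
      rw [h]; ring
    rw [he, integral_sub hf2_int hind, hind_int]; ring
  have hI3 : ∫ x, V x ∂(Measure.map (· + s) μ) = ∫ x, V (x + s) ∂μ :=
    integral_map hTm.aemeasurable hV.continuous.aestronglyMeasurable
  -- integrability of V against μ
  have haeK : ∀ᵐ x ∂μ, x ∈ K := by
    rw [ae_iff]; exact hKnull
  have hres : μ.restrict K = μ := Measure.restrict_eq_self_of_ae_mem haeK
  have hVint : Integrable V μ := by
    rw [← hres]; exact hV.continuous.continuousOn.integrableOn_compact hKc
  have hVsint : Integrable (fun x => V (x + s)) μ := by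
    rw [← hres]
    exact (hV.continuous.comp (continuous_id.add continuous_const)).continuousOn.integrableOn_compact hKc
  have hI3le : ∫ x, V (x + s) ∂μ ≤ ∫ x, V x ∂μ + 3 / 4 * s := by
    have hb : ∀ᵐ x ∂μ, V (x + s) ≤ V x + 3 / 4 * s :=
      haeK.mono fun x hx => hVshift x (hKsub hx)
    calc ∫ x, V (x + s) ∂μ ≤ ∫ x, (V x + 3 / 4 * s) ∂μ :=
          integral_mono_ae hVsint (hVint.add (integrable_const _)) hb
      _ = ∫ x, V x ∂μ + 3 / 4 * s := by
          rw [integral_add hVint (integrable_const _), integral_const]; simp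
  have key : logEnergy V (Measure.map (· + s) μ) < logEnergy V μ := by
    unfold logEnergy
    rw [hI1, hI2, hI3]
    have hsm : -s * m ≤ -s * 1 := mul_le_mul_of_nonneg_left hm_le (by linarith)
    nlinarith [hI3le, hsm]
  refine ⟨⟨s, hs_neg, key⟩, Measure.map (· + s) μ, hPs, ?_, ?_, ?_, key⟩
  · have hK'c : IsCompact ((· + s) '' K) := hKc.image (by continuity)
    refine ⟨(· + s) '' K, hK'c, ?_⟩
    rw [Measure.map_apply hTm hK'c.isClosed.measurableSet.compl]
    refine measure_mono_null ?_ hKnull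
    intro x hx hxK
    exact hx (Set.mem_image_of_mem _ hxK)
  · rw [hprod, integrable_map_measure (g := fun p : ℝ × ℝ => Real.log |p.1 - p.2|)
      (((measurable_fst.sub measurable_snd).abs).log).aestronglyMeasurable
      (hTm.prodMap hTm).aemeasurable]
    have : ((fun p : ℝ × ℝ => Real.log |p.1 - p.2|) ∘ Prod.map (· + s) (· + s))
        = fun p : ℝ × ℝ => Real.log |p.1 - p.2| := by
      funext p; simp [Prod.map, add_sub_add_right_eq_sub]
    rw [this]; exact hlog
  · rw [hprod, integrable_map_measure (g := fun p : ℝ × ℝ => Real.log |Real.exp p.1 - Real.exp p.2|)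
      (((measurable_fst.exp.sub measurable_snd.exp).abs).log).aestronglyMeasurable
      (hTm.prodMap hTm).aemeasurable]
    have he : ((fun p : ℝ × ℝ => Real.log |Real.exp p.1 - Real.exp p.2|)
          ∘ Prod.map (· + s) (· + s))
        = fun p : ℝ × ℝ => Real.log |Real.exp p.1 - Real.exp p.2|
            + (if p.1 = p.2 then (0 : ℝ) else s) := by
      funext p
      simpa [Prod.map] using logexp_shift s p.1 p.2
    rw [he]; exact hlogexp.add hind
end
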